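/- arXiv:2307.07639 — 9 statements merged into one kernel-verified Lean document; each statement's English description precedes it below -/
import Mathlib

section
/- Let G be a group with subgroups K ≤ H, suppose H/K is the internal direct product of a family of subgroups (H_i/K)_{i∈ℚ} with H_i ≠ K for all i, and let L ≤ G satisfy L ∩ H ≤ K and ⟨H_i, L⟩ = H_i L (as sets) for each i. Then setting K_r = ⟨H_i : i < r⟩ for r ∈ ℝ, the family (K_r L)_{r∈ℝ} is a strictly increasing chain of subgroups of G. -/
open scoped Pointwise

/-- If `↑B * ↑A ⊆ ↑A * ↑B`, then `↑(A ⊔ B) = ↑A * ↑B`. -/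
theorem aux_sup_coe_eq_mul {G : Type*} [Group G] (A B : Subgroup G)
    (h : (B : Set G) * (A : Set G) ⊆ (A : Set G) * (B : Set G)) :
    ((A ⊔ B : Subgroup G) : Set G) = (A : Set G) * (B : Set G) := by
  have hmulmem : ∀ x y : G, x ∈ (A : Set G) * (B : Set G) → y ∈ (A : Set G) * (B : Set G) →
      x * y ∈ (A : Set G) * (B : Set G) := by
    rintro _ _ ⟨a, ha, b, hb, rfl⟩ ⟨a', ha', b', hb', rfl⟩
    obtain ⟨a'', ha'', b'', hb'', hba⟩ := h (Set.mul_mem_mul hb ha')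
    have hba' : a'' * b'' = b * a' := hba
    refine ⟨a * a'', mul_mem ha ha'', b'' * b', mul_mem hb'' hb', ?_⟩
    show a * a'' * (b'' * b') = a * b * (a' * b')
    rw [mul_assoc a, ← mul_assoc a'', hba']; group
  have hinvmem : ∀ x : G, x ∈ (A : Set G) * (B : Set G) →
      x⁻¹ ∈ (A : Set G) * (B : Set G) := by
    rintro _ ⟨a, ha, b, hb, rfl⟩
    obtain ⟨a', ha', b', hb', hba⟩ := h (Set.mul_mem_mul (inv_mem hb) (inv_mem ha))
    have hba' : a' * b' = b⁻¹ * a⁻¹ := hba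
    exact ⟨a', ha', b', hb', by show a' * b' = (a * b)⁻¹; rw [hba']; group⟩
  set P : Subgroup G :=
    { carrier := (A : Set G) * (B : Set G)
      one_mem' := ⟨1, one_mem A, 1, one_mem B, one_mul 1⟩
      mul_mem' := fun hx hy => hmulmem _ _ hx hy
      inv_mem' := fun hx => hinvmem _ hx } with hP
  have hAB : A ⊔ B ≤ P :=
    sup_le (fun a ha => ⟨a, ha, 1, one_mem B, mul_one a⟩)
      (fun b hb => ⟨1, one_mem A, b, hb, one_mul b⟩)
  apply Set.Subset.antisymm hAB
  rintro _ ⟨a, ha, b, hb, rfl⟩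
  exact mul_mem (le_sup_left (a := A) (b := B) ha) (le_sup_right (a := A) (b := B) hb)

set_option maxHeartbeats 1000000 in
/-- Key Lemma: let `K ≤ H ≤ G` with `K` normal in `H`, suppose `H/K` is the internal
restricted direct product of non-trivial subgroups `(H_i/K)_{i∈ℚ}` (`K ≤ H_i ≤ H`,
`H_i ≠ K`), and let `L ≤ G` satisfy `L ∩ H ≤ K` and `⟨H_i, L⟩ = H_i L` for each `i`.
Then with `K_r = ⟨H_i : i < r⟩`, the family `(K_r L)_{r∈ℝ}` is a strictly increasing
chain of subgroups of `G`. -/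
theorem stmt_3 {G : Type*} [Group G] (H K : Subgroup G) (Hi : ℚ → Subgroup G)
    (L : Subgroup G)
    (hKH : K ≤ H)
    (hKnorm : (K.subgroupOf H).Normal)
    (hKHi : ∀ i, K ≤ Hi i) (hHiH : ∀ i, Hi i ≤ H) (hne : ∀ i, Hi i ≠ K)
    -- `H/K` is the internal direct product of the `H_i/K`:
    (hind : iSupIndep fun i =>
      ((Hi i).subgroupOf H).map (QuotientGroup.mk' (K.subgroupOf H)))
    (hsup : (⨆ i, ((Hi i).subgroupOf H).map (QuotientGroup.mk' (K.subgroupOf H))) = ⊤)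
    (hcomm : ∀ i j, i ≠ j →
      ∀ x ∈ ((Hi i).subgroupOf H).map (QuotientGroup.mk' (K.subgroupOf H)),
      ∀ y ∈ ((Hi j).subgroupOf H).map (QuotientGroup.mk' (K.subgroupOf H)), Commute x y)
    (hLH : L ⊓ H ≤ K)
    (hprod : ∀ i, ((Hi i ⊔ L : Subgroup G) : Set G) = (Hi i : Set G) * (L : Set G)) :
    StrictMono (fun r : ℝ => (⨆ i ∈ {i : ℚ | (i : ℝ) < r}, Hi i) ⊔ L) ∧
      ∀ r : ℝ, (((⨆ i ∈ {i : ℚ | (i : ℝ) < r}, Hi i) ⊔ L : Subgroup G) : Set G) =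
        ((⨆ i ∈ {i : ℚ | (i : ℝ) < r}, Hi i : Subgroup G) : Set G) * (L : Set G) := by
  set Kr : ℝ → Subgroup G := fun r => ⨆ i ∈ {i : ℚ | (i : ℝ) < r}, Hi i with hKr
  -- `L * Hi i ⊆ Hi i * L`
  have hcommL : ∀ i : ℚ, (L : Set G) * (Hi i : Set G) ⊆ (Hi i : Set G) * (L : Set G) := by
    rintro i _ ⟨l, hl, h, hh, rfl⟩
    have h1 : h⁻¹ * l⁻¹ ∈ ((Hi i ⊔ L : Subgroup G) : Set G) := by
      rw [hprod i]
      exact Set.mul_mem_mul (inv_mem hh) (inv_mem hl)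
    have h2 : (h⁻¹ * l⁻¹)⁻¹ ∈ ((Hi i ⊔ L : Subgroup G) : Set G) := inv_mem (SetLike.mem_coe.1 h1)
    rw [hprod i] at h2
    show l * h ∈ (Hi i : Set G) * (L : Set G)
    simpa using h2
  -- `L * Kr r ⊆ Kr r * L`
  have hLK : ∀ r : ℝ, (L : Set G) * (Kr r : Set G) ⊆ (Kr r : Set G) * (L : Set G) := by
    rintro r _ ⟨l, hl, k, hk, rfl⟩
    show l * k ∈ (Kr r : Set G) * (L : Set G)
    have hk0 : k ∈ ⨆ i ∈ {i : ℚ | (i : ℝ) < r}, Hi i := hk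
    rw [iSup_subtype'] at hk0
    have hk' : k ∈ ⨆ i : {i : ℚ // i ∈ {i : ℚ | (i : ℝ) < r}}, Hi i.1 := hk0
    have hKle : ∀ i : {i : ℚ // i ∈ {i : ℚ | (i : ℝ) < r}}, Hi i.1 ≤ Kr r := fun i =>
      le_iSup₂ (f := fun (i : ℚ) (_ : (i : ℝ) < r) => Hi i) i.1 i.2
    refine Subgroup.iSup_induction (fun i : {i : ℚ // i ∈ {i : ℚ | (i : ℝ) < r}} => Hi i.1)
      (C := fun k => ∀ l' ∈ L, l' * k ∈ (Kr r : Set G) * (L : Set G)) hk'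
      ?_ ?_ ?_ l hl
    · intro i x hx l' hl'
      obtain ⟨h', hh', l'', hl'', hrep⟩ := hcommL i.1 (Set.mul_mem_mul hl' hx)
      exact ⟨h', hKle i hh', l'', hl'', hrep⟩
    · intro l' hl'
      exact ⟨1, one_mem _, l', hl', by group⟩
    · intro x y ihx ihy l' hl'
      obtain ⟨a, ha, l1, hl1, hrep1⟩ := ihx l' hl'
      obtain ⟨b, hb, l2, hl2, hrep2⟩ := ihy l1 hl1
      have hrep1' : a * l1 = l' * x := hrep1
      have hrep2' : b * l2 = l1 * y := hrep2
      exact ⟨a * b, mul_mem ha hb, l2, hl2, by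
        show a * b * l2 = l' * (x * y)
        rw [mul_assoc, hrep2', ← mul_assoc, hrep1', mul_assoc]⟩
  -- part 2
  have part2 : ∀ r : ℝ, ((Kr r ⊔ L : Subgroup G) : Set G) = (Kr r : Set G) * (L : Set G) :=
    fun r => aux_sup_coe_eq_mul (Kr r) L (hLK r)
  have hKrH : ∀ r, Kr r ≤ H := fun r => iSup₂_le fun i _ => hHiH i
  -- key independence fact
  have key : ∀ (r : ℝ) (q : ℚ), r ≤ (q : ℝ) → ∀ h ∈ Hi q, h ∈ Kr r → h ∈ K := by
    intro r q hrq h hhq hhr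
    set f := QuotientGroup.mk' (K.subgroupOf H) with hf
    have hsub : (Kr r).subgroupOf H = ⨆ i ∈ {i : ℚ | (i : ℝ) < r}, (Hi i).subgroupOf H := by
      apply Subgroup.map_injective H.subtype_injective
      simp only [Subgroup.map_iSup, Subgroup.subgroupOf_map_subtype]
      rw [inf_eq_left.2 (hKrH r)]
      exact (iSup_congr fun i => iSup_congr fun hi => (inf_eq_left.2 (hHiH i)).symm)
    have hh' : (⟨h, hHiH q hhq⟩ : H) ∈ (Kr r).subgroupOf H := hhr
    rw [hsub] at hh'
    have hx1 : f ⟨h, hHiH q hhq⟩ ∈ ((Hi q).subgroupOf H).map f := ⟨_, hhq, rfl⟩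
    have hx2 : f ⟨h, hHiH q hhq⟩ ∈
        ⨆ (j) (_ : j ≠ q), ((Hi j).subgroupOf H).map f := by
      have hle : ((⨆ i ∈ {i : ℚ | (i : ℝ) < r}, (Hi i).subgroupOf H).map f) ≤
          ⨆ (j) (_ : j ≠ q), ((Hi j).subgroupOf H).map f := by
        simp only [Subgroup.map_iSup]
        refine iSup₂_le fun i hi => ?_
        have hiq : i ≠ q := by
          rintro rfl
          exact absurd (lt_of_lt_of_le hi hrq) (lt_irrefl _)
        exact le_iSup₂ (f := fun j (_ : j ≠ q) => ((Hi j).subgroupOf H).map f) i hiq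
      exact hle ⟨_, hh', rfl⟩
    have hone := (hind q).le_bot ⟨hx1, hx2⟩
    rw [Subgroup.mem_bot] at hone
    have hker : (⟨h, hHiH q hhq⟩ : H) ∈ f.ker := hone
    rw [hf, QuotientGroup.ker_mk'] at hker
    exact hker
  refine ⟨?_, part2⟩
  intro r1 r2 hlt
  show Kr r1 ⊔ L < Kr r2 ⊔ L
  have hle : Kr r1 ⊔ L ≤ Kr r2 ⊔ L := by
    refine sup_le_sup_right (iSup₂_le fun i hi => le_iSup₂ (f := fun (i : ℚ) (_ : (i:ℝ) < r2) => Hi i) i ?_) L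
    exact lt_trans hi hlt
  obtain ⟨q, hq1, hq2⟩ := exists_rat_btwn hlt
  obtain ⟨h, hh, hhK⟩ := SetLike.not_le_iff_exists.1
    (fun hle' => hne q (le_antisymm hle' (hKHi q)))
  refine SetLike.lt_iff_le_and_exists.2 ⟨hle, h,
    le_sup_left (a := Kr r2) (b := L) ((le_iSup₂ (f := fun (i : ℚ) (_ : (i:ℝ) < r2) => Hi i) q hq2) hh), ?_⟩
  intro hmem
  have hset : h ∈ (Kr r1 : Set G) * (L : Set G) := by rw [← part2 r1]; exact hmem
  obtain ⟨a, ha, l, hl, hrep⟩ := hset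
  have hrep' : a * l = h := hrep
  have hlH : l ∈ H := by
    have hl' : l = a⁻¹ * h := by rw [← hrep']; group
    rw [hl']
    exact mul_mem (inv_mem (hKrH r1 ha)) (hHiH q hh)
  have hlK : l ∈ K := hLH ⟨hl, hlH⟩
  have hKle : K ≤ Kr r1 := by
    obtain ⟨p, hp⟩ := exists_rat_lt r1
    exact le_trans (hKHi p) (le_iSup₂ (f := fun (i : ℚ) (_ : (i:ℝ) < r1) => Hi i) p hp)
  have hhKr : h ∈ Kr r1 := by rw [← hrep']; exact mul_mem ha (hKle hlK)
  exact hhK (key r1 q (le_of_lt hq1) h hh hhKr)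
end

section
/- Let G be a group and N a normal subgroup. If N satisfies the maximal condition on G-invariant subgroups (every ascending chain of normal-in-G subgroups of N stabilizes) and G/N satisfies the weak maximal condition on normal subgroups (there is no ascending chain (M_i)_{i∈ℕ} of normal subgroups of G/N with each index |M_{i+1} : M_i| infinite), then G satisfies the weak maximal condition on normal subgroups. -/
/-! If the normal subgroups `Xₙ` form a chain of infinite indices, the chain `Xₙ ∩ N`
stabilizes from some `n₀` on. For `n ≥ n₀` Dedekind's modular law gives
`XₙN ∩ Xₙ₊₁ = Xₙ(N ∩ Xₙ₊₁) = Xₙ`, so `|Xₙ₊₁N/N : XₙN/N| = |Xₙ₊₁ : XₙN ∩ Xₙ₊₁| = |Xₙ₊₁ : Xₙ|`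
is infinite, and the images of the `Xₙ` in `G/N` violate the weak maximal condition there. -/

/-- A group `X` satisfies the weak maximal condition on normal subgroups if there is no
strictly ascending sequence of normal subgroups, each of infinite index in the next. -/
def WeakMaxNormal (X : Type*) [Group X] : Prop :=
  ¬ ∃ f : ℕ → Subgroup X, StrictMono f ∧ (∀ n, (f n).Normal) ∧
    ∀ n, (f n).relIndex (f (n + 1)) = 0

open scoped Pointwise

namespace Subgroup

variable {G : Type*} [Group G]

theorem sup_inf_assoc_of_le_of_normal {H K : Subgroup G} (N : Subgroup G) [N.Normal]
    (hHK : H ≤ K) : (H ⊔ N) ⊓ K = H ⊔ N ⊓ K := by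
  refine le_antisymm (fun x ⟨hxHN, hxK⟩ => ?_)
    (sup_le (le_inf le_sup_left hHK) (inf_le_inf_right K le_sup_right))
  obtain ⟨h, hh, n, hn, rfl⟩ : x ∈ (H : Set G) * (N : Set G) := mul_normal H N ▸ hxHN
  have hnK : n ∈ K := by simpa using K.mul_mem (K.inv_mem (hHK hh)) hxK
  exact mul_mem (mem_sup_left hh) (mem_sup_right ⟨hn, hnK⟩)

theorem relIndex_map_mk'_of_inf_le {H K N : Subgroup G} [N.Normal] (hHK : H ≤ K)
    (hNK : N ⊓ K ≤ H) :
    (H.map (QuotientGroup.mk' N)).relIndex (K.map (QuotientGroup.mk' N)) = H.relIndex K := by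
  rw [← relIndex_comap, comap_map_eq, QuotientGroup.ker_mk', ← inf_relIndex_right,
    sup_inf_assoc_of_le_of_normal N hHK, sup_of_le_left hNK]

theorem strictMono_of_relIndex_succ_eq_zero {f : ℕ → Subgroup G} (hf : Monotone f)
    (h : ∀ n, (f n).relIndex (f (n + 1)) = 0) : StrictMono f :=
  strictMono_nat_of_lt_succ fun n => (hf n.le_succ).lt_of_ne fun heq => by
    simpa [heq] using h n

end Subgroup

/-- If `N ⊴ G` satisfies the maximal condition on `G`-invariant subgroups and `G/N`
satisfies the weak maximal condition on normal subgroups, then `G` satisfies the weak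
maximal condition on normal subgroups. -/
theorem stmt_5 {G : Type*} [Group G] (N : Subgroup G) (hN : N.Normal)
    (hmaxN : ∀ f : ℕ →o Subgroup G, (∀ n, f n ≤ N ∧ (f n).Normal) →
      ∃ n, ∀ m, n ≤ m → f m = f n)
    (hGN : WeakMaxNormal (G ⧸ N)) :
    WeakMaxNormal G := by
  rintro ⟨f, hf, hfN, hrel⟩
  obtain ⟨n₀, hn₀⟩ := hmaxN ⟨fun n => f n ⊓ N, fun _ _ h => inf_le_inf_right N (hf.monotone h)⟩
    fun n => ⟨inf_le_right, Subgroup.normal_inf_normal (hH := hfN n) ..⟩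
  have hN_inf_le : ∀ n, N ⊓ f (n₀ + n + 1) ≤ f (n₀ + n) := fun n =>
    calc N ⊓ f (n₀ + n + 1) = f n₀ ⊓ N := by rw [inf_comm]; exact hn₀ (n₀ + n + 1) (by omega)
      _ ≤ f (n₀ + n) := inf_le_left.trans (hf.monotone (by omega))
  let M n := (f (n₀ + n)).map (QuotientGroup.mk' N)
  have hM : ∀ n, (M n).relIndex (M (n + 1)) = 0 := fun n =>
    (Subgroup.relIndex_map_mk'_of_inf_le (hf.monotone (by omega)) (hN_inf_le n)).trans
      (hrel _)
  have hM_mono : Monotone M := fun _ _ h => Subgroup.map_mono (hf.monotone (by omega))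
  exact hGN ⟨M, Subgroup.strictMono_of_relIndex_succ_eq_zero hM_mono hM,
    fun n => (hfN _).map _ (QuotientGroup.mk'_surjective N), hM⟩
end

section
/- Let G be a group and N a normal subgroup. If N satisfies the minimal condition on G-invariant subgroups and G/N satisfies the weak minimal condition on normal subgroups, then G satisfies the weak minimal condition on normal subgroups. -/
/-! Once the chain `f n ⊓ N` has stabilised, passing to `G ⧸ N` loses no index: if `B ≤ A` and
`B ⊓ N = A ⊓ N`, then `(B ⊔ N) ⊓ A = B`, so `|AN/N : BN/N| = |A : (B ⊔ N) ⊓ A| = |A : B|`.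
Hence the tail of an infinite-index chain in `G` maps to an infinite-index chain in `G ⧸ N`. -/

/-- A group `X` satisfies the weak minimal condition on normal subgroups if there is no
strictly descending sequence of normal subgroups, each of infinite index in the previous. -/
def WeakMinNormal (X : Type*) [Group X] : Prop :=
  ¬ ∃ f : ℕ → Subgroup X, StrictAnti f ∧ (∀ n, (f n).Normal) ∧
    ∀ n, (f (n + 1)).relIndex (f n) = 0

namespace Subgroup

variable {G H : Type*} [Group G] [Group H]

theorem sup_normal_inf_eq_of_inf_eq {A B N : Subgroup G} [N.Normal] (hBA : B ≤ A)
    (h : B ⊓ N = A ⊓ N) : (B ⊔ N) ⊓ A = B := by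
  refine le_antisymm (fun x hx => ?_) (le_inf le_sup_left hBA)
  obtain ⟨hxBN, hxA⟩ := mem_inf.mp hx
  rw [← SetLike.mem_coe, mul_normal] at hxBN
  obtain ⟨b, hb, n, hn, rfl⟩ := hxBN
  have hnA : n ∈ A := by simpa using A.mul_mem (A.inv_mem (hBA hb)) hxA
  have hnB : n ∈ B := (h ▸ ⟨hnA, hn⟩ : n ∈ B ⊓ N).1
  exact B.mul_mem hb hnB

theorem relIndex_map_map_of_inf_ker_eq (φ : G →* H) {A B : Subgroup G} (hBA : B ≤ A)
    (h : B ⊓ φ.ker = A ⊓ φ.ker) : (B.map φ).relIndex (A.map φ) = B.relIndex A := by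
  rw [← relIndex_comap, comap_map_eq, ← inf_relIndex_right, sup_normal_inf_eq_of_inf_eq hBA h]

theorem strictAnti_of_relIndex_succ_eq_zero {f : ℕ → Subgroup G} (hf : Antitone f)
    (h : ∀ n, (f (n + 1)).relIndex (f n) = 0) : StrictAnti f :=
  strictAnti_nat_of_succ_lt fun n => (hf n.le_succ).lt_of_ne fun heq => by
    simpa [heq] using h n

end Subgroup

open Subgroup in
/-- If `N ⊴ G` satisfies the minimal condition on `G`-invariant subgroups and `G/N`
satisfies the weak minimal condition on normal subgroups, then `G` satisfies the weak
minimal condition on normal subgroups. -/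
theorem stmt_6 {G : Type*} [Group G] (N : Subgroup G) (hN : N.Normal)
    (hminN : ∀ f : ℕ → Subgroup G, Antitone f → (∀ n, f n ≤ N ∧ (f n).Normal) →
      ∃ n, ∀ m, n ≤ m → f m = f n)
    (hGN : WeakMinNormal (G ⧸ N)) :
    WeakMinNormal G := by
  rintro ⟨f, hf, hf_normal, hf_index⟩
  obtain ⟨k, hk⟩ := hminN (fun n => f n ⊓ N) (fun _ _ hab => inf_le_inf_right N (hf.antitone hab))
    fun n => ⟨inf_le_right, normal_inf_normal _ _⟩
  let g n := (f (k + n)).map (QuotientGroup.mk' N)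
  have hg_index n : (g (n + 1)).relIndex (g n) = 0 := by
    rw [relIndex_map_map_of_inf_ker_eq _ (hf.antitone (by omega))]
    · exact hf_index (k + n)
    · rw [QuotientGroup.ker_mk', hk (k + (n + 1)) (by omega), hk (k + n) (by omega)]
  have hg_anti : Antitone g := fun _ _ hab => map_mono (hf.antitone (by omega))
  exact hGN ⟨g, strictAnti_of_relIndex_succ_eq_zero hg_anti hg_index,
    fun n => (hf_normal _).map _ (QuotientGroup.mk'_surjective N), hg_index⟩
end

section
/- Let G be a group in which all cyclic subgroups are nearly normal (i.e., |⟨x⟩^G : ⟨x⟩| is finite for every x ∈ G). Then G is an FC-group: every element of G has finitely many conjugates. -/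
open Subgroup

/-- Every subgroup of a cyclic subgroup `zpowers u` is `zpowers (u ^ t)` for some `t : ℕ`. -/
lemma aux_sub_zpowers {G : Type*} [Group G] {u : G} {K : Subgroup G}
    (hK : K ≤ zpowers u) : ∃ t : ℕ, K = zpowers (u ^ t) := by
  classical
  set S : AddSubgroup ℤ :=
    { carrier := {k : ℤ | u ^ k ∈ K}
      zero_mem' := by simp [K.one_mem]
      add_mem' := by intro a b ha hb; simpa [zpow_add] using K.mul_mem ha hb
      neg_mem' := by intro a ha; simpa [zpow_neg] using K.inv_mem ha } with hS
  obtain ⟨a, ha⟩ := Int.subgroup_cyclic S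
  refine ⟨a.natAbs, le_antisymm ?_ ?_⟩
  · intro y hy
    obtain ⟨m, hm⟩ := hK hy
    simp only at hm
    have hmS : m ∈ S := by simp only [hS, AddSubgroup.mem_mk, Set.mem_setOf_eq]; show u ^ m ∈ K; rw [hm]; exact hy
    rw [ha, AddSubgroup.mem_closure_singleton] at hmS
    obtain ⟨n, hn⟩ := hmS
    refine ⟨(Int.sign a) * n, ?_⟩
    simp only
    rw [← zpow_natCast u a.natAbs, ← zpow_mul, ← hm, ← hn]
    congr 1
    rw [smul_eq_mul]
    rw [← mul_assoc, mul_comm ((a.natAbs : ℤ)) (Int.sign a), Int.sign_mul_natAbs, mul_comm]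
  · rw [zpowers_le, ← zpow_natCast]
    have haS : a ∈ S := by rw [ha]; exact AddSubgroup.mem_closure_singleton.2 ⟨1, one_smul _ _⟩
    rcases Int.natAbs_eq a with h | h
    · rw [← h]; exact haS
    · have h2 : -a ∈ S := S.neg_mem haS
      rw [show ((a.natAbs : ℤ)) = -a by omega]
      exact h2

/-- Two generators of the same infinite cyclic group agree up to inversion. -/
lemma aux_gen_eq {G : Type*} [Group G] {u v : G} (hu : ¬IsOfFinOrder u)
    (h : zpowers u = zpowers v) : v = u ∨ v = u⁻¹ := by
  have hinj := injective_zpow_iff_not_isOfFinOrder.2 hu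
  obtain ⟨m, hm⟩ : v ∈ zpowers u := h ▸ mem_zpowers v
  obtain ⟨n, hn⟩ : u ∈ zpowers v := h.symm ▸ mem_zpowers u
  simp only at hm hn
  rw [← hm, ← zpow_mul] at hn
  have hmn : m * n = 1 := hinj (a₁ := m * n) (a₂ := 1) (by simpa using hn)
  rcases Int.eq_one_or_neg_one_of_mul_eq_one' hmn with ⟨h1, _⟩ | ⟨h1, _⟩
  · left; rw [← hm, h1, zpow_one]
  · right; rw [← hm, h1, zpow_neg, zpow_one]

/-- Index of `zpowers (u^t)` in `zpowers u` for `u` of infinite order. -/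
lemma aux_relindex_zpowers {G : Type*} [Group G] {u : G} (hu : ¬IsOfFinOrder u) (t : ℤ) :
    (zpowers (u ^ t)).relIndex (zpowers u) = t.natAbs := by
  have hinj := injective_zpow_iff_not_isOfFinOrder.2 hu
  rw [← Subgroup.range_zpowersHom u, ← Subgroup.index_comap]
  have : comap (zpowersHom G u) (zpowers (u ^ t)) = AddSubgroup.toSubgroup (AddSubgroup.zmultiples t) := by
    ext m
    simp only [mem_comap, zpowersHom_apply, mem_zpowers_iff]
    constructor
    · rintro ⟨k, hk⟩
      rw [← zpow_mul] at hk
      have := hinj hk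
      have h2 : Multiplicative.toAdd m ∈ AddSubgroup.zmultiples t :=
        Int.mem_zmultiples_iff.2 ⟨k, by omega⟩
      exact h2
    · intro hm
      have h2 : Multiplicative.toAdd m ∈ AddSubgroup.zmultiples t := hm
      obtain ⟨k, hk⟩ := Int.mem_zmultiples_iff.1 h2
      exact ⟨k, by rw [← zpow_mul]; congr 1; omega⟩
  rw [this, AddSubgroup.index_toSubgroup, Int.index_zmultiples]

/-- The core of `zpowers x` relative to `N`, as a subgroup of `G`. -/
def auxCore {G : Type*} [Group G] (N : Subgroup G) (x : G) : Subgroup G where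
  carrier := {y : G | y ∈ N ∧ ∀ n ∈ N, n * y * n⁻¹ ∈ zpowers x}
  one_mem' := ⟨N.one_mem, fun n _ => by simpa using Subgroup.one_mem _⟩
  mul_mem' := by
    rintro a b ⟨haN, ha⟩ ⟨hbN, hb⟩
    refine ⟨N.mul_mem haN hbN, fun n hn => ?_⟩
    have : n * (a * b) * n⁻¹ = (n * a * n⁻¹) * (n * b * n⁻¹) := by group
    rw [this]
    exact Subgroup.mul_mem _ (ha n hn) (hb n hn)
  inv_mem' := by
    rintro a ⟨haN, ha⟩
    refine ⟨N.inv_mem haN, fun n hn => ?_⟩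
    have : n * a⁻¹ * n⁻¹ = (n * a * n⁻¹)⁻¹ := by group
    rw [this]
    exact Subgroup.inv_mem _ (ha n hn)

lemma auxCore_le_N {G : Type*} [Group G] (N : Subgroup G) (x : G) : auxCore N x ≤ N :=
  fun _ hy => hy.1

lemma auxCore_le_zpowers {G : Type*} [Group G] (N : Subgroup G) (x : G) :
    auxCore N x ≤ zpowers x := fun y hy => by simpa using hy.2 1 N.one_mem

/-- `auxCore N x` is normalized by elements of `N`. -/
lemma auxCore_conj_mem {G : Type*} [Group G] {N : Subgroup G} {x y n : G}
    (hy : y ∈ auxCore N x) (hn : n ∈ N) : n * y * n⁻¹ ∈ auxCore N x := by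
  obtain ⟨hyN, hy2⟩ := hy
  refine ⟨N.mul_mem (N.mul_mem hn hyN) (N.inv_mem hn), fun m hm => ?_⟩
  have : m * (n * y * n⁻¹) * m⁻¹ = (m * n) * y * (m * n)⁻¹ := by group
  rw [this]
  exact hy2 (m * n) (N.mul_mem hm hn)

/-- `auxCore N g` is the image in `G` of the normal core of `(zpowers g).subgroupOf N`. -/
lemma auxCore_eq_map {G : Type*} [Group G] (N : Subgroup G) (g : G) :
    auxCore N g = Subgroup.map N.subtype (((zpowers g).subgroupOf N).normalCore) := by
  ext y
  constructor
  · rintro ⟨hyN, hy⟩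
    refine ⟨⟨y, hyN⟩, fun b => ?_, rfl⟩
    exact hy b b.2
  · rintro ⟨⟨y', hy'N⟩, hy', rfl⟩
    exact ⟨hy'N, fun n hn => hy' ⟨n, hn⟩⟩

lemma auxCore_relindex {G : Type*} [Group G] (N : Subgroup G) (g : G)
    (h : (zpowers g).relIndex N ≠ 0) : (auxCore N g).relIndex N ≠ 0 := by
  rw [auxCore_eq_map]
  have : Subgroup.FiniteIndex ((zpowers g).subgroupOf N) := ⟨h⟩
  have hfi : Subgroup.FiniteIndex (((zpowers g).subgroupOf N).normalCore) :=
    Subgroup.finiteIndex_normalCore _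
  have heq : (Subgroup.map N.subtype (((zpowers g).subgroupOf N).normalCore)).relIndex N
      = (((zpowers g).subgroupOf N).normalCore).index := by
    rw [Subgroup.relIndex, Subgroup.subgroupOf, Subgroup.comap_map_eq_self_of_injective
      N.subtype_injective]
  rw [heq]
  exact hfi.index_ne_zero

lemma aux_mem_zpowers_conj {G : Type*} [Group G] {a g w : G} :
    w ∈ zpowers (a * g * a⁻¹) ↔ a⁻¹ * w * a ∈ zpowers g := by
  have h1 : zpowers (a * g * a⁻¹) = Subgroup.map (MulAut.conj a).toMonoidHom (zpowers g) := by
    rw [MonoidHom.map_zpowers]; rfl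
  rw [h1, Subgroup.mem_map_equiv, MulAut.conj_symm_apply]

lemma aux_map_conj_N {G : Type*} [Group G] (N : Subgroup G) [hN : N.Normal] (a : G) :
    Subgroup.map (MulAut.conj a).toMonoidHom N = N := by
  ext w
  rw [Subgroup.mem_map_equiv, MulAut.conj_symm_apply]
  constructor
  · intro hw
    have := hN.conj_mem _ hw a
    simpa [mul_assoc] using this
  · intro hw
    simpa [mul_assoc] using hN.conj_mem _ hw a⁻¹

lemma auxCore_conj {G : Type*} [Group G] (N : Subgroup G) [hN : N.Normal] (a g : G) :
    auxCore N (a * g * a⁻¹) = Subgroup.map (MulAut.conj a).toMonoidHom (auxCore N g) := by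
  ext y
  rw [Subgroup.mem_map_equiv, MulAut.conj_symm_apply]
  constructor
  · rintro ⟨hyN, hy⟩
    refine ⟨by simpa [mul_assoc] using hN.conj_mem _ hyN a⁻¹, fun n hn => ?_⟩
    have h2 := hy (a * n * a⁻¹) (by simpa [mul_assoc] using hN.conj_mem _ hn a)
    rw [aux_mem_zpowers_conj] at h2
    convert h2 using 1
    group
  · rintro ⟨hyN, hy⟩
    have hyN' : y ∈ N := by simpa [mul_assoc] using hN.conj_mem _ hyN a
    refine ⟨hyN', fun n hn => ?_⟩
    rw [aux_mem_zpowers_conj]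
    have h2 := hy (a⁻¹ * n * a) (by simpa [mul_assoc] using hN.conj_mem _ hn a⁻¹)
    convert h2 using 1
    group

lemma aux_relindex_conj {G : Type*} [Group G] (N A : Subgroup G) [N.Normal] (a : G) :
    (Subgroup.map (MulAut.conj a).toMonoidHom A).relIndex N = A.relIndex N := by
  conv_lhs => rw [← aux_map_conj_N N a]
  rw [Subgroup.map_equiv_eq_comap_symm' (MulAut.conj a) A,
    Subgroup.map_equiv_eq_comap_symm' (MulAut.conj a) N, Subgroup.relIndex_comap]
  congr 1
  ext w
  rw [Subgroup.mem_map_equiv]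
  simp
  rw [show a⁻¹ * (a * w * a⁻¹) * a = w by group]

/-- If every cyclic subgroup of `G` is nearly normal (has finite index in its normal
closure), then `G` is an FC-group: every element has finitely many conjugates. -/
theorem stmt_11 {G : Type*} [Group G]
    (h : ∀ x : G, (Subgroup.zpowers x).relIndex (Subgroup.normalClosure {x}) ≠ 0) :
    ∀ g : G, {x : G | ∃ a : G, a * g * a⁻¹ = x}.Finite := by
  classical
  intro g
  obtain ⟨N, hNdef⟩ : ∃ N, N = Subgroup.normalClosure ({g} : Set G) := ⟨_, rfl⟩
  haveI hNn : N.Normal := hNdef ▸ Subgroup.normalClosure_normal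
  have hgN : g ∈ N := hNdef ▸ Subgroup.subset_normalClosure rfl
  have hHN : zpowers g ≤ N := (zpowers_le).2 hgN
  have hclassN : ∀ a : G, a * g * a⁻¹ ∈ N := fun a => hNn.conj_mem g hgN a
  have hrel0 : (zpowers g).relIndex N ≠ 0 := hNdef ▸ h g
  by_cases hford : IsOfFinOrder g
  · -- finite order case : N is finite
    haveI hfzp : Finite ↥(zpowers g) := hford.finite_zpowers.to_subtype
    have h1 : (⊥ : Subgroup G).relIndex (zpowers g) ≠ 0 := by
      rw [Subgroup.relIndex_bot_left]
      exact Nat.card_pos.ne'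
    have h2 : (⊥ : Subgroup G).relIndex N ≠ 0 := by
      rw [← Subgroup.relIndex_mul_relIndex (⊥ : Subgroup G) (zpowers g) N bot_le hHN]
      exact mul_ne_zero h1 hrel0
    rw [Subgroup.relIndex_bot_left] at h2
    haveI : Finite ↥N := Nat.finite_of_card_ne_zero h2
    refine Set.Finite.subset (N : Set G).toFinite ?_
    rintro x ⟨a, rfl⟩
    exact hclassN a
  · -- infinite order case
    have hinjg : Function.Injective fun n : ℤ => g ^ n :=
      injective_zpow_iff_not_isOfFinOrder.2 hford
    have hA0 : (auxCore N g).relIndex N ≠ 0 := auxCore_relindex N g hrel0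
    obtain ⟨t0, hA⟩ := aux_sub_zpowers (auxCore_le_zpowers N g)
    have ht0 : t0 ≠ 0 := by
      intro ht0
      rw [ht0, pow_zero, zpowers_one_eq_bot] at hA
      rw [hA, Subgroup.relIndex_bot_left] at hA0
      haveI : Finite ↥N := Nat.finite_of_card_ne_zero hA0
      exact (infinite_zpowers.2 hford) (Set.Finite.subset (N : Set G).toFinite hHN)
    obtain ⟨u, hudef⟩ : ∃ u : G, u = g ^ (t0 : ℤ) := ⟨_, rfl⟩
    have hA' : auxCore N g = zpowers u := by rw [hA, hudef, zpow_natCast]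
    have hu : ¬IsOfFinOrder u := by
      intro hfin
      obtain ⟨n, hn, hn1⟩ := hfin.exists_pow_eq_one
      have hn2 : g ^ ((t0 : ℤ) * (n : ℤ)) = g ^ (0 : ℤ) := by
        rw [zpow_mul, zpow_zero, ← hudef, ← hn1, zpow_natCast]
      have hn3 : (t0 : ℤ) * (n : ℤ) = 0 := hinjg hn2
      rcases mul_eq_zero.1 hn3 with h' | h' <;> omega
    have hinju : Function.Injective fun n : ℤ => u ^ n :=
      injective_zpow_iff_not_isOfFinOrder.2 hu
    obtain ⟨c, hcdef⟩ : ∃ c : ℕ, c = (auxCore N g).relIndex N := ⟨_, rfl⟩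
    have hc0 : c ≠ 0 := by rw [hcdef]; exact hA0
    obtain ⟨M, hMdef⟩ : ∃ M : ℤ, M = (t0 : ℤ) * (Nat.factorial c : ℤ) := ⟨_, rfl⟩
    have hM0 : M ≠ 0 := by
      have h1 := Nat.factorial_pos c
      rw [hMdef]
      positivity
    have hgM : g ^ M = u ^ (Nat.factorial c : ℤ) := by
      rw [hudef, ← zpow_mul, hMdef]
    -- Key 1 : every conjugate x of g satisfies x ^ M = g ^ M or x ^ M = g ^ (-M)
    have key1 : ∀ a : G, (a * g * a⁻¹) ^ M = g ^ M ∨ (a * g * a⁻¹) ^ M = g ^ (-M) := by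
      intro a
      obtain ⟨x, hxdef⟩ : ∃ x : G, x = a * g * a⁻¹ := ⟨_, rfl⟩
      rw [← hxdef]
      obtain ⟨B, hBdef⟩ : ∃ B, B = auxCore N x := ⟨_, rfl⟩
      have hBconj : B = Subgroup.map (MulAut.conj a).toMonoidHom (auxCore N g) := by
        rw [hBdef, hxdef]; exact auxCore_conj N a g
      obtain ⟨v, hvdef⟩ : ∃ v : G, v = x ^ (t0 : ℤ) := ⟨_, rfl⟩
      have hvconj : v = a * u * a⁻¹ := by rw [hvdef, hxdef, conj_zpow, hudef]
      have hB' : B = zpowers v := by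
        rw [hBconj, hA', MonoidHom.map_zpowers, hvconj]
        rfl
      have hv : ¬IsOfFinOrder v := by
        intro hfin
        apply hu
        obtain ⟨n, hn, hn1⟩ := hfin.exists_pow_eq_one
        refine isOfFinOrder_iff_pow_eq_one.2 ⟨n, hn, ?_⟩
        have h1 : a * u ^ n * a⁻¹ = 1 := by rw [← conj_pow, ← hvconj, hn1]
        calc u ^ n = a⁻¹ * (a * u ^ n * a⁻¹) * a := by group
        _ = 1 := by rw [h1]; group
      have hinjv : Function.Injective fun n : ℤ => v ^ n :=
        injective_zpow_iff_not_isOfFinOrder.2 hv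
      have hB0 : B.relIndex N = c := by rw [hBconj, aux_relindex_conj, hcdef]
      have hBN : B ≤ N := by rw [hBdef]; exact auxCore_le_N N x
      obtain ⟨D, hDdef⟩ : ∃ D, D = auxCore N g ⊓ B := ⟨_, rfl⟩
      have hDA : D ≤ auxCore N g := hDdef ▸ inf_le_left
      have hDB : D ≤ B := hDdef ▸ inf_le_right
      have hd0 : D.relIndex N ≠ 0 := by
        rw [hDdef]
        exact Subgroup.relIndex_inf_ne_zero hA0 (by rw [hB0]; exact hc0)
      have hjc : D.relIndex (auxCore N g) * c = D.relIndex N := by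
        rw [hcdef]
        exact Subgroup.relIndex_mul_relIndex D (auxCore N g) N hDA (auxCore_le_N N g)
      have hkc : D.relIndex B * c = D.relIndex N := by
        rw [← hB0]
        exact Subgroup.relIndex_mul_relIndex D B N hDB hBN
      have hj0 : D.relIndex (auxCore N g) ≠ 0 := by
        intro h0
        rw [h0, zero_mul] at hjc
        exact hd0 hjc.symm
      have hjk : D.relIndex (auxCore N g) = D.relIndex B :=
        Nat.eq_of_mul_eq_mul_right (Nat.pos_of_ne_zero hc0) (hjc.trans hkc.symm)
      have hjlec : D.relIndex (auxCore N g) ≤ c := by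
        have h1 : D.relIndex N ≤ c * c := by
          calc D.relIndex N ≤ (auxCore N g).relIndex N * B.relIndex N := by
                rw [hDdef]; exact Subgroup.relIndex_inf_le
          _ = c * c := by rw [hB0, ← hcdef]
        have h2 : D.relIndex (auxCore N g) * c ≤ c * c := hjc ▸ h1
        exact Nat.le_of_mul_le_mul_right h2 (Nat.pos_of_ne_zero hc0)
      -- D is cyclic, generated by u ^ j and also by v ^ j where j is the relindex
      obtain ⟨j', hDu⟩ := aux_sub_zpowers ((hDA.trans (le_of_eq hA')) : D ≤ zpowers u)
      obtain ⟨k', hDv⟩ := aux_sub_zpowers ((hDB.trans (le_of_eq hB')) : D ≤ zpowers v)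
      have hj' : j' = D.relIndex (auxCore N g) := by
        have h1 := aux_relindex_zpowers hu (j' : ℤ)
        rw [zpow_natCast, ← hDu, Int.natAbs_natCast, ← hA'] at h1
        exact h1.symm
      have hk' : k' = D.relIndex (auxCore N g) := by
        have h1 := aux_relindex_zpowers hv (k' : ℤ)
        rw [zpow_natCast, ← hDv, Int.natAbs_natCast, ← hB'] at h1
        rw [← h1, hjk]
      have hzz : zpowers (u ^ (j' : ℤ)) = zpowers (v ^ (j' : ℤ)) := by
        rw [zpow_natCast, zpow_natCast, ← hDu, hDv, hk', hj']
      have hj'0 : j' ≠ 0 := by rw [hj']; exact hj0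
      have huj : ¬IsOfFinOrder (u ^ (j' : ℤ)) := by
        intro hfin
        obtain ⟨n, hn, hn1⟩ := hfin.exists_pow_eq_one
        have h2 : u ^ ((j' : ℤ) * n) = u ^ (0 : ℤ) := by
          rw [zpow_mul, zpow_zero, ← hn1, zpow_natCast]
        have h3 : (j' : ℤ) * n = 0 := hinju h2
        rcases mul_eq_zero.1 h3 with h' | h' <;> omega
      obtain ⟨q, hq⟩ : j' ∣ Nat.factorial c := by
        rw [hj']
        exact Nat.dvd_factorial (Nat.pos_of_ne_zero hj0) hjlec
      have hxM : x ^ M = v ^ (Nat.factorial c : ℤ) := by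
        rw [hvdef, ← zpow_mul, hMdef]
      have hfact : ((Nat.factorial c : ℤ)) = (j' : ℤ) * (q : ℤ) := by exact_mod_cast hq
      rcases aux_gen_eq huj hzz with hcase | hcase
      · left
        rw [hxM, hgM, hfact, zpow_mul, zpow_mul, hcase]
      · right
        rw [hxM, show g ^ (-M) = (u ^ (Nat.factorial c : ℤ))⁻¹ by rw [← hgM, ← zpow_neg],
          hfact, zpow_mul, zpow_mul, hcase, inv_zpow]
    -- Key 2 : every conjugate of g commutes with u
    have key2 : ∀ a : G, Commute (a * g * a⁻¹) u := by
      intro a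
      obtain ⟨x, hxdef⟩ : ∃ x : G, x = a * g * a⁻¹ := ⟨_, rfl⟩
      rw [← hxdef]
      have hxN : x ∈ N := hxdef ▸ hclassN a
      have hmapA : Subgroup.map (MulAut.conj x).toMonoidHom (auxCore N g) = auxCore N g := by
        apply le_antisymm
        · rintro y hy
          rw [Subgroup.mem_map_equiv, MulAut.conj_symm_apply] at hy
          have h1 := auxCore_conj_mem hy hxN
          rwa [show x * (x⁻¹ * y * x) * x⁻¹ = y by group] at h1
        · intro y hy
          rw [Subgroup.mem_map_equiv, MulAut.conj_symm_apply]
          have h1 := auxCore_conj_mem hy (N.inv_mem hxN)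
          rwa [show x⁻¹ * y * x⁻¹⁻¹ = x⁻¹ * y * x by group] at h1
      have hzp : zpowers u = zpowers (x * u * x⁻¹) := by
        conv_lhs => rw [← hA', ← hmapA, hA']
        rw [MonoidHom.map_zpowers]
        rfl
      rcases aux_gen_eq hu hzp with hcase | hcase
      · calc x * u = (x * u * x⁻¹) * x := by group
        _ = u * x := by rw [hcase]
      · -- contradiction case
        exfalso
        have hMc : x * g ^ M * x⁻¹ = g ^ (-M) := by
          rw [hgM]
          calc x * u ^ (Nat.factorial c : ℤ) * x⁻¹
              = (x * u * x⁻¹) ^ (Nat.factorial c : ℤ) := conj_zpow.symm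
          _ = (u⁻¹) ^ (Nat.factorial c : ℤ) := by rw [hcase]
          _ = (u ^ (Nat.factorial c : ℤ))⁻¹ := by rw [inv_zpow]
          _ = (g ^ M)⁻¹ := by rw [hgM]
          _ = g ^ (-M) := (zpow_neg g M).symm
        have hcomm : x * g ^ M * x⁻¹ = g ^ M := by
          rcases hxdef ▸ key1 a with hk | hk
          · rw [← hk]
            group
          · have h2 : x * (x ^ M)⁻¹ * x⁻¹ = (x ^ M)⁻¹ := by group
            rw [show g ^ M = (x ^ M)⁻¹ by rw [hk, ← zpow_neg, neg_neg]]
            exact h2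
        rw [hcomm] at hMc
        have h3 : M = -M := hinjg hMc
        omega
    -- Conclusion : build an injection from the conjugacy class
    haveI hfia : Subgroup.FiniteIndex ((auxCore N g).subgroupOf N) := ⟨hA0⟩
    haveI : Finite (N ⧸ (auxCore N g).subgroupOf N) := inferInstance
    have hmemN : ∀ x : ↥{x : G | ∃ a : G, a * g * a⁻¹ = x}, (x : G) ∈ N := by
      rintro ⟨x, a, rfl⟩
      exact hclassN a
    set f : ↥{x : G | ∃ a : G, a * g * a⁻¹ = x} →
        (N ⧸ (auxCore N g).subgroupOf N) × Bool := fun x =>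
      (QuotientGroup.mk ⟨(x : G), hmemN x⟩,
        if (x : G) ^ M = g ^ M then true else false) with hfdef
    have hfinj : Function.Injective f := by
      rintro ⟨x, hx⟩ ⟨y, hy⟩ hxy
      rw [hfdef, Prod.mk.injEq] at hxy
      obtain ⟨h1, h2⟩ := hxy
      rw [QuotientGroup.eq] at h1
      rw [Subgroup.mem_subgroupOf] at h1
      simp only [MulMemClass.coe_mul, InvMemClass.coe_inv] at h1
      rw [hA'] at h1
      obtain ⟨s, hs⟩ := h1
      simp only at hs h2
      have hyx : y = x * u ^ s := by
        rw [hs]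
        group
      obtain ⟨a, ha⟩ := hx
      obtain ⟨b, hb⟩ := hy
      have hcx : Commute x u := ha ▸ key2 a
      have hxMy : x ^ M = y ^ M := by
        by_cases hxMcase : x ^ M = g ^ M
        · by_cases hyMcase : y ^ M = g ^ M
          · rw [hxMcase, hyMcase]
          · rw [if_pos hxMcase, if_neg hyMcase] at h2
            simp at h2
        · by_cases hyMcase : y ^ M = g ^ M
          · rw [if_neg hxMcase, if_pos hyMcase] at h2
            simp at h2
          · rcases (ha ▸ key1 a : x ^ M = g ^ M ∨ x ^ M = g ^ (-M)) with hk | hk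
            · exact absurd hk hxMcase
            · rcases (hb ▸ key1 b : y ^ M = g ^ M ∨ y ^ M = g ^ (-M)) with hk2 | hk2
              · exact absurd hk2 hyMcase
              · rw [hk, hk2]
      have hus : u ^ (s * M) = 1 := by
        have h3 : y ^ M = x ^ M * (u ^ s) ^ M := by
          rw [hyx, (hcx.zpow_right s).mul_zpow]
        rw [← hxMy, left_eq_mul] at h3
        rw [zpow_mul]
        exact h3
      have h4 : (t0 : ℤ) * (s * M) = 0 := by
        apply hinjg
        show g ^ ((t0 : ℤ) * (s * M)) = g ^ (0 : ℤ)
        rw [zpow_mul, ← hudef, hus, zpow_zero]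
      have hs0 : s = 0 := by
        rcases mul_eq_zero.1 h4 with h' | h'
        · exfalso; exact ht0 (by exact_mod_cast h')
        · rcases mul_eq_zero.1 h' with h'' | h''
          · exact h''
          · exact absurd h'' hM0
      apply Subtype.ext
      show x = y
      rw [hyx, hs0, zpow_zero, mul_one]
    exact Set.finite_coe_iff.1 (Finite.of_injective f hfinj)
end

section
/- Let G be a group whose subgroup lattice contains no chain order-isomorphic to ℝ (real chain condition, RCC), where this property is considered for the poset of all subgroups. Then every subgroup and every quotient of G has RCC on all subgroups, and the class of groups with RCC on all subgroups is closed under extensions: if N ⊴ G, N has RCC and G/N has RCC, then G has RCC. -/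
/-- A group has the real chain condition (RCC) on subgroups if its subgroup lattice
contains no chain order-isomorphic to `ℝ` with its usual ordering. -/
def HasRCC (G : Type*) [Group G] : Prop :=
  ¬ ∃ f : ℝ → Subgroup G, StrictMono f

/-- RCC on all subgroups passes to subgroups and quotients, and is closed under
extensions. -/
theorem stmt_12 {G : Type*} [Group G] :
    (HasRCC G → ∀ H : Subgroup G, HasRCC H) ∧
    (HasRCC G → ∀ N : Subgroup G, ∀ _ : N.Normal, HasRCC (G ⧸ N)) ∧
    (∀ N : Subgroup G, ∀ _ : N.Normal, HasRCC N → HasRCC (G ⧸ N) → HasRCC G) := by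
  refine ⟨?_, ?_, ?_⟩
  · rintro h H ⟨f, hf⟩
    refine h ⟨fun r => (f r).map H.subtype, fun x y hxy => ?_⟩
    exact lt_of_le_of_ne (Subgroup.map_mono (hf hxy).le)
      (fun he => (hf hxy).ne (Subgroup.map_injective H.subtype_injective he))
  · rintro h N hN ⟨f, hf⟩
    refine h ⟨fun r => (f r).comap (QuotientGroup.mk' N), fun x y hxy => ?_⟩
    exact lt_of_le_of_ne (Subgroup.comap_mono (hf hxy).le)
      (fun he => (hf hxy).ne
        (Subgroup.comap_injective (QuotientGroup.mk'_surjective N) he))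
  · rintro N hN hNr hQr ⟨f, hf⟩
    set a : ℝ → Subgroup N := fun r => (f r).subgroupOf N with ha_def
    set b : ℝ → Subgroup (G ⧸ N) := fun r => (f r).map (QuotientGroup.mk' N) with hb_def
    have ha : Monotone a := fun x y h => Subgroup.comap_mono (hf.monotone h)
    have hb : Monotone b := fun x y h => Subgroup.map_mono (hf.monotone h)
    have hkey : ∀ x y : ℝ, x ≤ y → a x = a y → b x = b y → f x = f y := by
      intro x y hxy hab hbb
      refine le_antisymm (hf.monotone hxy) ?_
      intro k hk
      have hkb : QuotientGroup.mk' N k ∈ b x := by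
        rw [hbb]; exact ⟨k, hk, rfl⟩
      obtain ⟨h, hh, hπ⟩ := hkb
      have hmem : h⁻¹ * k ∈ N := (QuotientGroup.eq (s := N)).mp hπ
      have h1 : (⟨h⁻¹ * k, hmem⟩ : N) ∈ a y := by
        rw [Subgroup.mem_subgroupOf]
        exact (f y).mul_mem (Subgroup.inv_mem _ (hf.monotone hxy hh)) hk
      rw [← hab, Subgroup.mem_subgroupOf] at h1
      have : h * (h⁻¹ * k) ∈ f x := (f x).mul_mem hh h1
      simpa using this
    by_cases hinj : Function.Injective a
    · exact hNr ⟨a, ha.strictMono_of_injective hinj⟩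
    · simp only [Function.Injective, not_forall] at hinj
      obtain ⟨x, y, hxy, hne⟩ := hinj
      -- wlog x < y
      obtain ⟨x, y, hlt, hconst⟩ : ∃ x y : ℝ, x < y ∧ a x = a y := by
        rcases lt_or_gt_of_ne hne with h | h
        · exact ⟨x, y, h, hxy⟩
        · exact ⟨y, x, h, hxy.symm⟩
      have hconst' : ∀ u v : ℝ, x ≤ u → u ≤ v → v ≤ y → a u = a v := by
        intro u v h1 h2 h3
        refine le_antisymm (ha h2) ?_
        calc a v ≤ a y := ha h3
        _ = a x := hconst.symm
        _ ≤ a u := ha h1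
      set e := orderIsoIooNegOneOne ℝ
      set φ : ℝ → ℝ := fun t => (x + y) / 2 + (y - x) / 2 * (e t : ℝ) with hφ_def
      have hφmono : StrictMono φ := by
        intro s t hst
        have : (e s : ℝ) < e t := e.strictMono hst
        have hpos : (0:ℝ) < (y - x) / 2 := by linarith
        simp only [hφ_def]
        nlinarith
      have hφmem : ∀ t, x < φ t ∧ φ t < y := by
        intro t
        have h1 : (-1:ℝ) < e t := (e t).2.1
        have h2 : (e t : ℝ) < 1 := (e t).2.2
        constructor <;> (simp only [hφ_def]; nlinarith)
      refine hQr ⟨fun t => b (φ t), fun s t hst => ?_⟩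
      refine lt_of_le_of_ne (hb (hφmono hst).le) (fun he => ?_)
      have haeq : a (φ s) = a (φ t) :=
        hconst' _ _ (hφmem s).1.le (hφmono hst).le (hφmem t).2.le
      exact (hf (hφmono hst)).ne (hkey _ _ (hφmono hst).le haeq he)
end

section
/- Let X be a Chernikov abelian subgroup of an FC-group G such that G/Z(G) is residually finite and the finite residual of X (its largest divisible subgroup) is contained in Z(G). If X/X_G is finite then X^G/X_G is finite; hence X is both nearly normal and almost normal in G. -/
open Subgroup

private lemma extract_lemma {Q : Type*} [Group Q] [DecidableEq Q] {S : Set Q}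
    (hconj : ∀ s ∈ S, ∀ q : Q, q * s * q⁻¹ ∈ S) (s : Q) :
    ∀ l : List Q, (∀ x ∈ l, x ∈ S) →
      ∃ l' : List Q, (∀ x ∈ l', x ∈ S) ∧ l'.length + l.count s = l.length ∧
        l.prod = s ^ (l.count s) * l'.prod := by
  intro l
  induction l with
  | nil => exact fun _ => ⟨[], by simp, by simp, by simp⟩
  | cons a t ih =>
    intro hmem
    obtain ⟨t', ht'S, hlen, hprod⟩ := ih (fun x hx => hmem x (List.mem_cons_of_mem a hx))
    by_cases h : a = s
    · subst h
      refine ⟨t', ht'S, ?_, ?_⟩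
      · rw [List.count_cons_self, List.length_cons]; omega
      · rw [List.count_cons_self, List.prod_cons, hprod, pow_succ']
        group
    · have hcount : (a :: t).count s = t.count s :=
        List.count_cons_of_ne h
      have hbS : (s ^ t.count s)⁻¹ * a * s ^ t.count s ∈ S := by
        have := hconj a (hmem a List.mem_cons_self) (s ^ t.count s)⁻¹
        simpa using this
      refine ⟨((s ^ t.count s)⁻¹ * a * s ^ t.count s) :: t', ?_, ?_, ?_⟩
      · intro x hx
        rcases List.mem_cons.mp hx with rfl | hx
        · exact hbS
        · exact ht'S x hx
      · rw [hcount, List.length_cons, List.length_cons]; omega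
      · rw [hcount, List.prod_cons, List.prod_cons, hprod]
        group

/-- Dietzmann's lemma: the subgroup generated by a finite, conjugation-closed set of
torsion elements is finite. -/
private lemma dietzmann {Q : Type*} [Group Q] {S : Set Q} (hS : S.Finite)
    (hconj : ∀ s ∈ S, ∀ q : Q, q * s * q⁻¹ ∈ S)
    (htor : ∀ s ∈ S, IsOfFinOrder s) :
    ((Subgroup.closure S : Subgroup Q) : Set Q).Finite := by
  classical
  set B : ℕ := ∑ s ∈ hS.toFinset, (orderOf s - 1) with hB
  -- every product of elements of `S` is a product of at most `B` elements of `S`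
  have reduce : ∀ n : ℕ, ∀ l : List Q, l.length ≤ n → (∀ x ∈ l, x ∈ S) →
      ∃ l' : List Q, (∀ x ∈ l', x ∈ S) ∧ l'.length ≤ B ∧ l'.prod = l.prod := by
    intro n
    induction n with
    | zero =>
      intro l hl hmem
      exact ⟨l, hmem, by omega, rfl⟩
    | succ n ih =>
      intro l hl hmem
      by_cases hlB : l.length ≤ B
      · exact ⟨l, hmem, hlB, rfl⟩
      · have hsub : l.toFinset ⊆ hS.toFinset := by
          intro x hx
          exact hS.mem_toFinset.mpr (hmem x (List.mem_toFinset.mp hx))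
        have hsum : l.length = ∑ s ∈ hS.toFinset, l.count s := by
          rw [← List.sum_toFinset_count_eq_length]
          exact (Finset.sum_subset hsub (fun x _ hx =>
            List.count_eq_zero.mpr (fun h => hx (List.mem_toFinset.mpr h))))
        have hex : ∃ s ∈ hS.toFinset, orderOf s ≤ l.count s := by
          by_contra hcon
          push_neg at hcon
          have hle : ∀ s ∈ hS.toFinset, l.count s ≤ orderOf s - 1 := by
            intro s hs
            have h1 := (htor s (hS.mem_toFinset.mp hs)).orderOf_pos
            have := hcon s hs
            omega
          have := Finset.sum_le_sum hle
          omega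
        obtain ⟨s, hsF, hcount⟩ := hex
        have hsS : s ∈ S := hS.mem_toFinset.mp hsF
        have hord : 0 < orderOf s := (htor s hsS).orderOf_pos
        obtain ⟨l', hl'S, hlen, hprod⟩ := extract_lemma hconj s l hmem
        set k := l.count s with hk
        set r := k % orderOf s with hr
        have hrk : r < k := lt_of_lt_of_le (Nat.mod_lt _ hord) hcount
        have hnew : ∀ x ∈ List.replicate r s ++ l', x ∈ S := by
          intro x hx
          rcases List.mem_append.mp hx with hx | hx
          · rw [List.eq_of_mem_replicate hx]; exact hsS
          · exact hl'S x hx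
        obtain ⟨l'', h1, h2, h3⟩ := ih (List.replicate r s ++ l')
          (by rw [List.length_append, List.length_replicate]; omega) hnew
        refine ⟨l'', h1, h2, ?_⟩
        rw [h3, List.prod_append, List.prod_replicate, hprod, hr, pow_mod_orderOf]
  -- the set of products of lists over `S` is a subgroup
  have hinv : ∀ l : List Q, (∀ x ∈ l, x ∈ S) →
      ∃ l' : List Q, (∀ x ∈ l', x ∈ S) ∧ l'.prod = l.prod⁻¹ := by
    intro l
    induction l with
    | nil => exact fun _ => ⟨[], by simp, by simp⟩
    | cons a t ih =>
      intro hmem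
      obtain ⟨u, huS, huprod⟩ := ih (fun x hx => hmem x (List.mem_cons_of_mem a hx))
      have haS : a ∈ S := hmem a List.mem_cons_self
      have hord : 0 < orderOf a := (htor a haS).orderOf_pos
      have hainv : a ^ (orderOf a - 1) = a⁻¹ := by
        have : a * a ^ (orderOf a - 1) = 1 := by
          rw [← pow_succ']
          have : orderOf a - 1 + 1 = orderOf a := by omega
          rw [this, pow_orderOf_eq_one]
        exact inv_eq_of_mul_eq_one_right this |>.symm
      refine ⟨u ++ List.replicate (orderOf a - 1) a, ?_, ?_⟩
      · intro x hx
        rcases List.mem_append.mp hx with hx | hx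
        · exact huS x hx
        · rw [List.eq_of_mem_replicate hx]; exact haS
      · rw [List.prod_append, List.prod_replicate, huprod, hainv, List.prod_cons,
          mul_inv_rev]
  set M : Subgroup Q :=
    { carrier := {q | ∃ l : List Q, (∀ x ∈ l, x ∈ S) ∧ l.prod = q}
      one_mem' := ⟨[], by simp, by simp⟩
      mul_mem' := by
        rintro a b ⟨la, haS, rfl⟩ ⟨lb, hbS, rfl⟩
        exact ⟨la ++ lb, fun x hx => (List.mem_append.mp hx).elim (haS x) (hbS x),
          List.prod_append⟩
      inv_mem' := by
        rintro a ⟨l, hlS, rfl⟩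
        obtain ⟨l', h1, h2⟩ := hinv l hlS
        exact ⟨l', h1, h2⟩ } with hM
  have hle : Subgroup.closure S ≤ M :=
    (Subgroup.closure_le M).mpr (fun s hs => ⟨[s], by simpa using hs, by simp⟩)
  -- the target finite set
  have hSsub : Finite ↥S := hS.to_subtype
  have hfin : ((fun l : List Q => l.prod) ''
      ((fun l : List ↥S => l.map Subtype.val) '' {l : List ↥S | l.length ≤ B})).Finite :=
    ((List.finite_length_le ↥S B).image _).image _
  refine hfin.subset ?_
  intro q hq
  obtain ⟨l, hlS, rfl⟩ := hle hq
  obtain ⟨l', h1, h2, h3⟩ := reduce l.length l le_rfl hlS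
  refine ⟨l', ⟨l'.attach.map (fun x => ⟨x.1, h1 x.1 x.2⟩), ?_, ?_⟩, h3⟩
  · simpa using h2
  · simp

private lemma relIndex_eq_card_map {G : Type*} [Group G] (N K : Subgroup G) [N.Normal] :
    N.relIndex K = Nat.card ↥(K.map (QuotientGroup.mk' N)) := by
  have hker : ((QuotientGroup.mk' N).comp K.subtype).ker = N.subgroupOf K := by
    ext x
    simp [MonoidHom.mem_ker, Subgroup.mem_subgroupOf, QuotientGroup.eq_one_iff]
  have hrange : ((QuotientGroup.mk' N).comp K.subtype).range = K.map (QuotientGroup.mk' N) := by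
    rw [MonoidHom.range_comp, Subgroup.range_subtype]
  rw [Subgroup.relIndex, Subgroup.index]
  exact Nat.card_congr <|
    ((QuotientGroup.quotientMulEquivOfEq hker.symm).trans
      ((QuotientGroup.quotientKerEquivRange _).trans
        (MulEquiv.subgroupCongr hrange))).toEquiv

private lemma centralizer_index_ne_zero {G : Type*} [Group G] {g : G}
    (h : {x : G | ∃ a : G, a * g * a⁻¹ = x}.Finite) :
    (Subgroup.centralizer {g}).index ≠ 0 := by
  have e : (Subgroup.centralizer {g}).index = (MulAction.stabilizer (ConjAct G) g).index := by
    rw [Subgroup.centralizer_eq_comap_stabilizer]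
    exact Subgroup.index_comap_of_surjective _ ConjAct.toConjAct.surjective
  rw [e, MulAction.index_stabilizer]
  have horb : (MulAction.orbit (ConjAct G) g).Finite := by
    refine h.subset ?_
    intro x hx
    obtain ⟨c, hc⟩ := (isConj_iff).mp (ConjAct.mem_orbit_conjAct.mp hx).symm
    exact ⟨c, hc⟩
  have : 0 < (MulAction.orbit (ConjAct G) g).ncard :=
    (Set.ncard_pos horb).mpr ⟨g, MulAction.mem_orbit_self g⟩
  omega

/-- Let `X` be a Chernikov abelian subgroup of an FC-group `G` such that `G/Z(G)` is
residually finite and the finite residual of `X` is contained in `Z(G)`. If `X/X_G` is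
finite, then `X^G/X_G` is finite; hence `X` is both nearly normal and almost normal. -/
theorem stmt_14 {G : Type*} [Group G] (X : Subgroup G)
    -- `G` is an FC-group
    (hFC : ∀ g : G, {x : G | ∃ a : G, a * g * a⁻¹ = x}.Finite)
    -- `X` is abelian
    (habel : ∀ x ∈ X, ∀ y ∈ X, Commute x y)
    -- `X` is a Chernikov group: it has a divisible (abelian) subgroup of finite index
    -- and satisfies the minimal condition on subgroups
    (hcher : ∃ D : Subgroup ↥X, D.index ≠ 0 ∧
      (∀ x ∈ D, ∀ n : ℕ, 0 < n → ∃ y ∈ D, y ^ n = x) ∧ WellFoundedLT (Subgroup ↥X))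
    -- `G/Z(G)` is residually finite
    (hres : ∀ q : G ⧸ Subgroup.center G, q ≠ 1 →
      ∃ K : Subgroup (G ⧸ Subgroup.center G), K.Normal ∧ K.index ≠ 0 ∧ q ∉ K)
    -- the finite residual of `X` is contained in `Z(G)`
    (hresid : ∀ x : ↥X, (∀ K : Subgroup ↥X, K.index ≠ 0 → x ∈ K) →
      (x : G) ∈ Subgroup.center G)
    -- `X/X_G` is finite
    (hcore : X.normalCore.relIndex X ≠ 0) :
    X.normalCore.relIndex (Subgroup.normalClosure (X : Set G)) ≠ 0 ∧
      X.relIndex (Subgroup.normalClosure (X : Set G)) ≠ 0 ∧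
      (Subgroup.normalizer (X : Set G)).index ≠ 0 := by
  classical
  set N := X.normalCore with hN
  haveI : N.Normal := X.normalCore_normal
  set π : G →* G ⧸ N := QuotientGroup.mk' N with hπ
  have hsurj : Function.Surjective π := QuotientGroup.mk'_surjective N
  set K := Subgroup.normalClosure (X : Set G) with hK
  -- the image of `X` in `G ⧸ N` is finite
  have hXmap0 : Nat.card ↥(X.map π) ≠ 0 := by
    rw [← relIndex_eq_card_map]; exact hcore
  have hXmapFin : Finite ↥(X.map π) := (Nat.card_ne_zero.mp hXmap0).2
  set T : Set (G ⧸ N) := ((X.map π : Subgroup (G ⧸ N)) : Set (G ⧸ N)) with hT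
  have hTfin : T.Finite := @Set.toFinite _ _ hXmapFin
  set S : Set (G ⧸ N) := ⋃ t ∈ T, {x | ∃ q, q * t * q⁻¹ = x} with hS
  have hmemS : ∀ x, x ∈ S ↔ ∃ t ∈ T, ∃ q, q * t * q⁻¹ = x := by
    intro x; simp [hS]
  have hTS : T ⊆ S := fun t ht => (hmemS t).mpr ⟨t, ht, 1, by group⟩
  have hSfin : S.Finite := by
    refine hTfin.biUnion ?_
    intro t ht
    obtain ⟨g, hgX, rfl⟩ := Subgroup.mem_map.mp (SetLike.mem_coe.mp ht)
    refine ((hFC g).image π).subset ?_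
    rintro x ⟨q, rfl⟩
    obtain ⟨a, rfl⟩ := hsurj q
    exact ⟨a * g * a⁻¹, ⟨a, rfl⟩, by simp⟩
  have hSconj : ∀ s ∈ S, ∀ q : G ⧸ N, q * s * q⁻¹ ∈ S := by
    intro s hs q
    obtain ⟨t, ht, q0, rfl⟩ := (hmemS s).mp hs
    exact (hmemS _).mpr ⟨t, ht, q * q0, by group⟩
  have hStor : ∀ s ∈ S, IsOfFinOrder s := by
    intro s hs
    obtain ⟨t, ht, q0, rfl⟩ := (hmemS s).mp hs
    have h1 : IsOfFinOrder t := by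
      haveI := hXmapFin
      have := isOfFinOrder_of_finite (⟨t, SetLike.mem_coe.mp ht⟩ : ↥(X.map π))
      exact (X.map π).subtype.isOfFinOrder this
    obtain ⟨n, hn, hpow⟩ := (isOfFinOrder_iff_pow_eq_one).mp h1
    exact (isOfFinOrder_iff_pow_eq_one).mpr ⟨n, hn, by rw [conj_pow, hpow]; group⟩
  have hclosed := dietzmann hSfin hSconj hStor
  have hnormal : (Subgroup.closure S).Normal := by
    constructor
    intro n hn g
    have hmap : (Subgroup.closure S).map (MulAut.conj g).toMonoidHom ≤ Subgroup.closure S := by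
      rw [MonoidHom.map_closure]
      apply Subgroup.closure_mono
      rintro x ⟨s, hs, rfl⟩
      simpa using hSconj s hs g
    have := hmap ⟨n, hn, rfl⟩
    simpa using this
  have hKmap : K.map π ≤ Subgroup.closure S := by
    rw [hK, Subgroup.map_normalClosure _ _ hsurj]
    exact Subgroup.normalClosure_le_normal
      (le_trans (le_of_eq rfl) (hTS.trans Subgroup.subset_closure))
  have hKfin : Finite ↥(K.map π) := by
    have hsub : ((K.map π : Subgroup (G ⧸ N)) : Set (G ⧸ N)) ⊆
        ((Subgroup.closure S : Subgroup (G ⧸ N)) : Set (G ⧸ N)) := hKmap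
    exact (hclosed.subset hsub).to_subtype
  have goal1 : N.relIndex K ≠ 0 := by
    rw [relIndex_eq_card_map]
    exact Nat.card_ne_zero.mpr ⟨⟨⟨1, Subgroup.one_mem _⟩⟩, hKfin⟩
  refine ⟨goal1, ?_, ?_⟩
  · -- `X.relIndex K ∣ N.relIndex K`
    have hle' : N.subgroupOf K ≤ X.subgroupOf K := fun x hx =>
      Subgroup.mem_subgroupOf.mpr (X.normalCore_le (Subgroup.mem_subgroupOf.mp hx))
    have hdvd : X.relIndex K ∣ N.relIndex K := Subgroup.index_dvd_of_le hle'
    intro h0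
    rw [h0] at hdvd
    exact goal1 (Nat.eq_zero_of_zero_dvd hdvd)
  · -- normalizer has finite index
    haveI hQfin : Finite (↥X ⧸ N.subgroupOf X) := (Nat.card_ne_zero.mp hcore).2
    set rep : (↥X ⧸ N.subgroupOf X) → G := fun c => ((Quotient.out c : ↥X) : G) with hrep
    have hrepX : ∀ c, rep c ∈ X := fun c => (Quotient.out c : ↥X).2
    have hXeq : X = Subgroup.closure ((N : Set G) ∪ Set.range rep) := by
      apply le_antisymm
      · intro x hx
        set x' : ↥X := ⟨x, hx⟩ with hx'
        set c := QuotientGroup.mk (s := N.subgroupOf X) x' with hc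
        have hout : (QuotientGroup.mk (Quotient.out c) : ↥X ⧸ N.subgroupOf X) = c :=
          QuotientGroup.out_eq' c
        have hmem : (Quotient.out c)⁻¹ * x' ∈ N.subgroupOf X := by
          rw [← QuotientGroup.eq (s := N.subgroupOf X)]
          rw [hout]
        have h2 : (rep c)⁻¹ * x ∈ N := by
          have := Subgroup.mem_subgroupOf.mp hmem
          simpa [hrep] using this
        have h3 : rep c ∈ Subgroup.closure ((N : Set G) ∪ Set.range rep) :=
          Subgroup.subset_closure (Or.inr ⟨c, rfl⟩)
        have h4 : (rep c)⁻¹ * x ∈ Subgroup.closure ((N : Set G) ∪ Set.range rep) :=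
          Subgroup.subset_closure (Or.inl h2)
        have := mul_mem h3 h4
        simpa using this
      · rw [Subgroup.closure_le]
        rintro y (hy | ⟨c, rfl⟩)
        · exact X.normalCore_le hy
        · exact hrepX c
    set C : Subgroup G := ⨅ c : (↥X ⧸ N.subgroupOf X), Subgroup.centralizer {rep c} with hC
    have hCind : C.index ≠ 0 :=
      Subgroup.index_iInf_ne_zero (fun c => centralizer_index_ne_zero (hFC (rep c)))
    have key : ∀ h : G, h ∈ C → ∀ x ∈ X, h * x * h⁻¹ ∈ X := by
      intro h hh x hx
      rw [hXeq] at hx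
      have hlift : Subgroup.closure ((N : Set G) ∪ Set.range rep) ≤
          X.comap (MulAut.conj h).toMonoidHom := by
        rw [Subgroup.closure_le]
        rintro y (hy | ⟨c, rfl⟩)
        · refine Subgroup.mem_comap.mpr (X.normalCore_le ?_)
          simpa using (inferInstance : N.Normal).conj_mem y hy h
        · have hcent : h ∈ Subgroup.centralizer {rep c} := (Subgroup.mem_iInf.mp hh) c
          have hcomm : rep c * h = h * rep c :=
            Subgroup.mem_centralizer_iff.mp hcent (rep c) rfl
          refine Subgroup.mem_comap.mpr ?_
          have : h * rep c * h⁻¹ = rep c := by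
            rw [← hcomm]; group
          simpa [this] using hrepX c
      have := hlift hx
      simpa using this
    have hCle : C ≤ Subgroup.normalizer (X : Set G) := by
      intro g hg
      rw [Subgroup.mem_normalizer_iff]
      intro x
      constructor
      · exact fun hx => key g hg x hx
      · intro hx
        have h2 := key g⁻¹ (inv_mem hg) _ hx
        rw [show g⁻¹ * (g * x * g⁻¹) * g⁻¹⁻¹ = x by group] at h2
        exact h2
    have hdvd : (Subgroup.normalizer (X : Set G)).index ∣ C.index := Subgroup.index_dvd_of_le hCle
    intro h0
    rw [h0] at hdvd
    exact hCind (Nat.eq_zero_of_zero_dvd hdvd)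
end

section
/- Let G be a periodic Baer group and D a subnormal divisible abelian subgroup of G. Then D is contained in the centre of G. -/
def IsSubnormal {G : Type*} [Group G] (H : Subgroup G) : Prop :=
  ∃ (n : ℕ) (f : Fin (n + 1) → Subgroup G), f 0 = H ∧ f (Fin.last n) = ⊤ ∧
    ∀ i : Fin n, f i.castSucc ≤ f i.succ ∧ ((f i.castSucc).subgroupOf (f i.succ)).Normal

lemma subnormal_chain {G : Type*} [Group G] {H : Subgroup G} (h : IsSubnormal H) :
    ∃ (k : ℕ) (F : ℕ → Subgroup G), F 0 = H ∧ F k = ⊤ ∧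
      (∀ i, F i ≤ F (i + 1)) ∧
      (∀ i, ∀ x ∈ F (i + 1), ∀ y ∈ F i, x * y * x⁻¹ ∈ F i) := by
  obtain ⟨n, f, h0, hl, hc⟩ := h
  refine ⟨n, fun j => f ⟨min j n, by omega⟩, ?_, ?_, ?_, ?_⟩
  · show f ⟨min 0 n, by omega⟩ = H
    have : (⟨min 0 n, by omega⟩ : Fin (n+1)) = 0 := by ext; simp
    rw [this, h0]
  · show f ⟨min n n, by omega⟩ = ⊤
    have : (⟨min n n, by omega⟩ : Fin (n+1)) = Fin.last n := by ext; simp [Fin.last]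
    rw [this, hl]
  · intro i
    show f ⟨min i n, by omega⟩ ≤ f ⟨min (i+1) n, by omega⟩
    rcases lt_or_ge i n with hi | hi
    · have h1 : (⟨min i n, by omega⟩ : Fin (n+1)) = (⟨i, hi⟩ : Fin n).castSucc := by
        ext; simp [Nat.min_eq_left hi.le]
      have h2 : (⟨min (i+1) n, by omega⟩ : Fin (n+1)) = (⟨i, hi⟩ : Fin n).succ := by
        ext; simp [Nat.min_eq_left hi]
      rw [h1, h2]; exact (hc ⟨i, hi⟩).1
    · have : min i n = min (i+1) n := by omega
      simp only [this]; exact le_refl _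
  · intro i x hx y hy
    simp only at hx hy ⊢
    rcases lt_or_ge i n with hi | hi
    · have h1 : (⟨min i n, by omega⟩ : Fin (n+1)) = (⟨i, hi⟩ : Fin n).castSucc := by
        ext; simp [Nat.min_eq_left hi.le]
      have h2 : (⟨min (i+1) n, by omega⟩ : Fin (n+1)) = (⟨i, hi⟩ : Fin n).succ := by
        ext; simp [Nat.min_eq_left hi]
      rw [h1] at hy ⊢
      rw [h2] at hx
      obtain ⟨hle, hN⟩ := hc ⟨i, hi⟩
      have := hN.conj_mem ⟨y, hle hy⟩ (by simpa [Subgroup.mem_subgroupOf] using hy) ⟨x, hx⟩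
      simpa [Subgroup.mem_subgroupOf] using this
    · have hmin : min i n = n := by omega
      have he : (⟨min i n, by omega⟩ : Fin (n+1)) = Fin.last n := by ext; simp [Fin.last, hmin]
      rw [he, hl]
      trivial
lemma key_lemma {G : Type*} [Group G] (g : G) (m : ℕ) (hm : 0 < m) (hgm : g ^ m = 1)
    (k : ℕ) (F : ℕ → Subgroup G) (hF0 : F 0 = Subgroup.zpowers g) (hFtop : F k = ⊤)
    (hmono : ∀ i, F i ≤ F (i + 1))
    (hconj : ∀ i, ∀ x ∈ F (i + 1), ∀ y ∈ F i, x * y * x⁻¹ ∈ F i)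
    (A : Subgroup G) (hAb : ∀ x ∈ A, ∀ y ∈ A, x * y = y * x)
    (hAg : ∀ x ∈ A, g⁻¹ * x * g ∈ A)
    (D : Subgroup G) (hDA : D ≤ A)
    (hdiv : ∀ d ∈ D, ∀ n : ℕ, 0 < n → ∃ e ∈ D, e ^ n = d) :
    ∀ d ∈ D, g * d = d * g := by
  set τ : G → G := fun x => x⁻¹ * (g⁻¹ * x * g) with hτ
  -- τ maps A to A
  have hτA : ∀ x ∈ A, τ x ∈ A := fun x hx => A.mul_mem (A.inv_mem hx) (hAg x hx)
  -- τ is multiplicative on A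
  have hτmul : ∀ x ∈ A, ∀ y ∈ A, τ (x * y) = τ x * τ y := by
    intro x hx y hy
    have c1 : y⁻¹ * x⁻¹ = x⁻¹ * y⁻¹ := hAb _ (A.inv_mem hy) _ (A.inv_mem hx)
    have c2 : y⁻¹ * (g⁻¹ * x * g) = (g⁻¹ * x * g) * y⁻¹ := hAb _ (A.inv_mem hy) _ (hAg x hx)
    show (x*y)⁻¹ * (g⁻¹*(x*y)*g) = (x⁻¹*(g⁻¹*x*g)) * (y⁻¹*(g⁻¹*y*g))
    calc (x*y)⁻¹ * (g⁻¹*(x*y)*g)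
        = y⁻¹ * x⁻¹ * ((g⁻¹*x*g) * (g⁻¹*y*g)) := by group
      _ = x⁻¹ * y⁻¹ * ((g⁻¹*x*g) * (g⁻¹*y*g)) := by rw [c1]
      _ = x⁻¹ * (y⁻¹ * (g⁻¹*x*g) * (g⁻¹*y*g)) := by group
      _ = x⁻¹ * ((g⁻¹*x*g) * y⁻¹ * (g⁻¹*y*g)) := by rw [c2]
      _ = (x⁻¹*(g⁻¹*x*g)) * (y⁻¹*(g⁻¹*y*g)) := by group
  have hτone : τ 1 = 1 := by show 1⁻¹ * (g⁻¹ * 1 * g) = 1; group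
  have hτpow : ∀ x ∈ A, ∀ n : ℕ, τ (x ^ n) = (τ x) ^ n := by
    intro x hx n
    induction n with
    | zero => simpa using hτone
    | succ n ih => rw [pow_succ, hτmul _ (A.pow_mem hx n) _ hx, ih, pow_succ]
  have hiterA : ∀ i, ∀ x ∈ A, τ^[i] x ∈ A := by
    intro i
    induction i with
    | zero => intro x hx; simpa using hx
    | succ i ih =>
      intro x hx
      rw [Function.iterate_succ_apply]
      exact ih _ (hτA x hx)
  have hiterpow : ∀ i, ∀ x ∈ A, ∀ n : ℕ, τ^[i] (x ^ n) = (τ^[i] x) ^ n := by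
    intro i
    induction i with
    | zero => intro x hx n; simp
    | succ i ih =>
      intro x hx n
      rw [Function.iterate_succ_apply, Function.iterate_succ_apply, hτpow x hx,
        ih _ (hτA x hx)]
  -- F9: local m-torsion
  have F9 : ∀ y : G, τ (τ y) = 1 → (τ y) ^ m = 1 := by
    intro y h
    have hfix : g⁻¹ * (τ y) * g = τ y := by
      have : (τ y)⁻¹ * (g⁻¹ * (τ y) * g) = 1 := h
      have := congrArg (fun z => (τ y) * z) this
      simpa [mul_assoc] using this
    have hfixpow : ∀ j : ℕ, g⁻¹ * (τ y) ^ j * g = (τ y) ^ j := by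
      intro j
      induction j with
      | zero => group
      | succ j ih =>
        calc g⁻¹ * (τ y)^(j+1) * g = (g⁻¹ * (τ y)^j * g) * (g⁻¹ * (τ y) * g) := by
              rw [pow_succ]; group
          _ = (τ y)^j * (τ y) := by rw [ih, hfix]
          _ = (τ y)^(j+1) := by rw [pow_succ]
    have claim : ∀ j : ℕ, (g ^ j)⁻¹ * y * g ^ j = y * (τ y) ^ j := by
      intro j
      induction j with
      | zero => simp
      | succ j ih =>
        calc (g^(j+1))⁻¹ * y * g^(j+1)
            = g⁻¹ * ((g^j)⁻¹ * y * g^j) * g := by rw [pow_succ]; group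
          _ = g⁻¹ * (y * (τ y)^j) * g := by rw [ih]
          _ = (g⁻¹ * y * g) * (g⁻¹ * (τ y)^j * g) := by group
          _ = (g⁻¹ * y * g) * (τ y)^j := by rw [hfixpow]
          _ = (y * τ y) * (τ y)^j := by show _ = (y * (y⁻¹ * (g⁻¹*y*g))) * _; group
          _ = y * (τ y)^(j+1) := by rw [pow_succ]; group
    have := claim m
    rw [hgm] at this
    simp only [inv_one, one_mul, mul_one] at this
    exact (mul_eq_left.mp this.symm)
  -- g is in every F i
  have hgF : ∀ i, g ∈ F i := by
    intro i
    induction i with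
    | zero => rw [hF0]; exact Subgroup.mem_zpowers g
    | succ i ih => exact hmono i ih
  -- τ pushes down the chain
  have F6 : ∀ i, ∀ x ∈ F (i + 1), τ x ∈ F i := by
    intro i x hx
    have h1 : x⁻¹ * g⁻¹ * (x⁻¹)⁻¹ ∈ F i :=
      hconj i x⁻¹ ((F (i+1)).inv_mem hx) g⁻¹ ((F i).inv_mem (hgF i))
    have h2 : (x⁻¹ * g⁻¹ * (x⁻¹)⁻¹) * g ∈ F i := (F i).mul_mem h1 (hgF i)
    have : τ x = (x⁻¹ * g⁻¹ * (x⁻¹)⁻¹) * g := by show x⁻¹ * (g⁻¹*x*g) = _; group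
    rw [this]; exact h2
  have F7 : ∀ j, ∀ x ∈ F j, τ^[j] x ∈ F 0 := by
    intro j
    induction j with
    | zero => intro x hx; simpa using hx
    | succ j ih =>
      intro x hx
      rw [Function.iterate_succ_apply]
      exact ih _ (F6 j x hx)
  have F8 : ∀ x ∈ Subgroup.zpowers g, τ x = 1 := by
    intro x hx
    obtain ⟨j, rfl⟩ := hx
    have hc : g⁻¹ * (g ^ j) * g = g ^ j := by
      have : Commute g (g ^ j) := (Commute.refl g).zpow_right j
      rw [mul_assoc, ← this.eq, ← mul_assoc]
      simp
    show (g^j)⁻¹ * (g⁻¹ * (g^j) * g) = 1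
    rw [hc]; simp
  -- the descent
  have base : ∀ d ∈ D, τ^[k + 1] d = 1 := by
    intro d hd
    have h1 : τ^[k] d ∈ F 0 := F7 k d (by rw [hFtop]; trivial)
    rw [Function.iterate_succ_apply']
    exact F8 _ (by rwa [hF0] at h1)
  have step : ∀ i, (∀ d ∈ D, τ^[i + 2] d = 1) → (∀ d ∈ D, τ^[i + 1] d = 1) := by
    intro i hP d hd
    obtain ⟨e, he, hem⟩ := hdiv d hd m hm
    have heA : e ∈ A := hDA he
    have h1 : τ^[i + 1] d = (τ^[i + 1] e) ^ m := by
      rw [← hem, hiterpow _ e heA]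
    have h2 : τ (τ (τ^[i] e)) = 1 := by
      have h := hP e he
      rwa [Function.iterate_succ_apply', Function.iterate_succ_apply'] at h
    have h3 := F9 (τ^[i] e) h2
    rw [h1, Function.iterate_succ_apply']
    exact h3
  have all : ∀ j, ∀ d ∈ D, τ^[(k - j) + 1] d = 1 := by
    intro j
    induction j with
    | zero => simpa using base
    | succ j ih =>
      rcases le_or_gt k j with h | h
      · have : k - (j + 1) = k - j := by omega
        rw [this]; exact ih
      · have heq : k - j = (k - (j + 1)) + 1 := by omega
        rw [heq] at ih
        exact step _ ih
  intro d hd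
  have := all k d hd
  simp only [Nat.sub_self, zero_add, Function.iterate_one] at this
  have h : d = g⁻¹ * d * g := inv_mul_eq_one.mp this
  calc g * d = g * (g⁻¹ * d * g) := by rw [← h]
    _ = d * g := by group

lemma aux_lemma : ∀ (n : ℕ) {G : Type u} [Group G]
    (hper : ∀ g : G, IsOfFinOrder g)
    (hbaer : ∀ g : G, ∃ (k : ℕ) (F : ℕ → Subgroup G), F 0 = Subgroup.zpowers g ∧ F k = ⊤ ∧
      (∀ i, F i ≤ F (i + 1)) ∧ (∀ i, ∀ x ∈ F (i + 1), ∀ y ∈ F i, x * y * x⁻¹ ∈ F i))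
    (F : ℕ → Subgroup G)
    (htop : F n = ⊤)
    (hmono : ∀ i < n, F i ≤ F (i + 1))
    (hconj : ∀ i < n, ∀ x ∈ F (i + 1), ∀ y ∈ F i, x * y * x⁻¹ ∈ F i)
    (habel : ∀ x ∈ F 0, ∀ y ∈ F 0, x * y = y * x)
    (hdiv : ∀ d ∈ F 0, ∀ m : ℕ, 0 < m → ∃ e ∈ F 0, e ^ m = d),
    F 0 ≤ Subgroup.center G := by
  intro n
  induction n with
  | zero =>
    intro G _ hper hbaer F htop hmono hconj habel hdiv d hd
    rw [Subgroup.mem_center_iff]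
    intro x
    exact habel x (by rw [htop]; trivial) d hd
  | succ n ih =>
    intro G _ hper hbaer F htop hmono hconj habel hdiv
    set N := F n with hNdef
    have hN : N.Normal := ⟨fun y hy x => hconj n (by omega) x (by rw [htop]; trivial) y hy⟩
    -- F 0 ≤ N
    have hF0N : F 0 ≤ N := by
      have : ∀ i ≤ n, F 0 ≤ F i := by
        intro i hi
        induction i with
        | zero => exact le_refl _
        | succ i ih2 => exact le_trans (ih2 (by omega)) (hmono i (by omega))
      exact this n (le_refl n)
    -- apply IH inside N
    have hcent : (F 0).subgroupOf N ≤ Subgroup.center ↥N := by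
      apply ih (G := ↥N) (F := fun i => (F i).subgroupOf N)
      · -- periodicity
        intro x
        obtain ⟨m, hm, hxm⟩ := isOfFinOrder_iff_pow_eq_one.mp (hper (x : G))
        exact isOfFinOrder_iff_pow_eq_one.mpr ⟨m, hm, by ext; push_cast [hxm]; rfl⟩
      · -- Baer
        intro x
        obtain ⟨k, Fg, h0, htopg, hmonog, hconjg⟩ := hbaer (x : G)
        refine ⟨k, fun i => (Fg i).subgroupOf N, ?_, ?_, ?_, ?_⟩
        · show (Fg 0).subgroupOf N = Subgroup.zpowers x
          rw [h0]
          ext y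
          simp only [Subgroup.mem_subgroupOf, Subgroup.mem_zpowers_iff]
          refine exists_congr fun j => ?_
          rw [← SubgroupClass.coe_zpow]
          exact ⟨fun h => Subtype.ext h, fun h => congrArg _ h⟩
        · show (Fg k).subgroupOf N = ⊤
          rw [htopg]
          ext y
          simp [Subgroup.mem_subgroupOf]
        · intro i y hy
          rw [Subgroup.mem_subgroupOf] at hy ⊢
          exact hmonog i hy
        · intro i a ha b hb
          rw [Subgroup.mem_subgroupOf] at ha hb ⊢
          push_cast
          exact hconjg i _ ha _ hb
      · -- top of the restricted chain
        show N.subgroupOf N = ⊤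
        exact Subgroup.subgroupOf_self N
      · -- mono
        intro i hi y hy
        rw [Subgroup.mem_subgroupOf] at hy ⊢
        exact hmono i (by omega) hy
      · -- conj
        intro i hi a ha b hb
        rw [Subgroup.mem_subgroupOf] at ha hb ⊢
        push_cast
        exact hconj i (by omega) _ ha _ hb
      · -- abelian
        intro a ha b hb
        rw [Subgroup.mem_subgroupOf] at ha hb
        exact Subtype.ext (habel _ ha _ hb)
      · -- divisible
        intro d hd m hm
        rw [Subgroup.mem_subgroupOf] at hd
        obtain ⟨e, he, hem⟩ := hdiv _ hd m hm
        refine ⟨⟨e, hF0N he⟩, by rwa [Subgroup.mem_subgroupOf], ?_⟩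
        ext
        push_cast [hem]
        rfl
    -- D := F 0 lies in A := centralizer(N) ⊓ N
    set A := Subgroup.centralizer (N : Set G) ⊓ N with hAdef
    have hDA : F 0 ≤ A := by
      intro d hd
      refine Subgroup.mem_inf.mpr ⟨?_, hF0N hd⟩
      rw [Subgroup.mem_centralizer_iff]
      intro y hy
      have hmem : (⟨d, hF0N hd⟩ : ↥N) ∈ Subgroup.center ↥N :=
        hcent (by rwa [Subgroup.mem_subgroupOf])
      have := Subgroup.mem_center_iff.mp hmem ⟨y, hy⟩
      exact congrArg Subtype.val this
    have hAb : ∀ x ∈ A, ∀ y ∈ A, x * y = y * x := by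
      intro x hx y hy
      rw [Subgroup.mem_inf] at hx hy
      exact Subgroup.mem_centralizer_iff.mp hy.1 x hx.2
    -- final: every g centralizes F 0
    intro d hd
    rw [Subgroup.mem_center_iff]
    intro g
    have hAg : ∀ x ∈ A, g⁻¹ * x * g ∈ A := by
      intro x hx
      rw [Subgroup.mem_inf] at hx ⊢
      constructor
      · rw [Subgroup.mem_centralizer_iff]
        intro y hy
        have hy' : g * y * g⁻¹ ∈ N := hN.conj_mem y hy g
        have hc := Subgroup.mem_centralizer_iff.mp hx.1 _ hy'
        calc y * (g⁻¹ * x * g) = g⁻¹ * ((g * y * g⁻¹) * x) * g := by group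
          _ = g⁻¹ * (x * (g * y * g⁻¹)) * g := by rw [hc]
          _ = (g⁻¹ * x * g) * y := by group
      · have := hN.conj_mem x hx.2 g⁻¹
        rwa [inv_inv] at this
    obtain ⟨m, hm, hgm⟩ := isOfFinOrder_iff_pow_eq_one.mp (hper g)
    obtain ⟨k, Fg, h0, htopg, hmonog, hconjg⟩ := hbaer g
    exact key_lemma g m hm hgm k Fg h0 htopg hmonog hconjg A hAb hAg (F 0) hDA hdiv d hd

/-- In a periodic Baer group, every subnormal divisible abelian subgroup is contained
in the centre. -/
theorem stmt_17 {G : Type*} [Group G]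
    -- `G` is periodic
    (hper : ∀ g : G, IsOfFinOrder g)
    -- `G` is a Baer group: every cyclic subgroup is subnormal
    (hbaer : ∀ g : G, IsSubnormal (Subgroup.zpowers g))
    (D : Subgroup G) (hsn : IsSubnormal D)
    -- `D` is abelian
    (habel : ∀ x ∈ D, ∀ y ∈ D, Commute x y)
    -- `D` is divisible
    (hdiv : ∀ d ∈ D, ∀ n : ℕ, 0 < n → ∃ e ∈ D, e ^ n = d) :
    D ≤ Subgroup.center G := by
  obtain ⟨k, F, hF0, hFtop, hmono, hconj⟩ := subnormal_chain hsn
  have := aux_lemma k hper (fun g => subnormal_chain (hbaer g)) F hFtop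
    (fun i _ => hmono i) (fun i _ => hconj i)
    (by rw [hF0]; exact fun x hx y hy => habel x hx y hy)
    (by rw [hF0]; exact hdiv)
  rwa [hF0] at this
end

section
/- Let G = X A be a group where A is an abelian normal subgroup, X is a subgroup with X ∩ A = {1}, X' (the derived subgroup of X) is subnormal in G of defect k, and set A₀ = A, A_{i} = [A_{i-1}, X'] for i ≥ 1. Then each A_i is a normal subgroup of G and A_k = {1}; moreover G = A₀X ≥ A₁X ≥ ⋯ ≥ A_kX = X is a descending chain of subgroups. -/
private lemma subgroupOf_normal_comm {G : Type*} [Group G] {H K : Subgroup G}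
    (hle : H ≤ K) (hn : (H.subgroupOf K).Normal) : ⁅K, H⁆ ≤ H := by
  rw [Subgroup.commutator_le]
  intro g₁ h₁ g₂ h₂
  have := hn.conj_mem ⟨g₂, hle h₂⟩ (by simpa [Subgroup.mem_subgroupOf] using h₂) ⟨g₁, h₁⟩
  rw [Subgroup.mem_subgroupOf] at this
  simpa [commutatorElement_def, mul_assoc] using mul_mem this (inv_mem h₂)

/-- Let `G = XA` with `A` an abelian normal subgroup, `X ≤ G`, `X ∩ A = 1`, and suppose
the derived subgroup `X'` of `X` is subnormal in `G` of defect `k`. With `A₀ = A` and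
`Aᵢ₊₁ = [Aᵢ, X']`, each `Aᵢ` is normal in `G`, `A_k = 1`, and
`G = A₀X ≥ A₁X ≥ ⋯ ≥ A_kX = X` is a descending chain of subgroups. -/
theorem stmt_18 {G : Type*} [Group G] (A X : Subgroup G)
    (hA : A.Normal) (habel : ∀ x ∈ A, ∀ y ∈ A, Commute x y)
    (hXA : X ⊓ A = ⊥) (hG : X ⊔ A = ⊤)
    (k : ℕ)
    -- `X' = ⁅X, X⁆` is subnormal in `G` of defect `k`
    (f : Fin (k + 1) → Subgroup G) (hf0 : f 0 = ⁅X, X⁆) (hfl : f (Fin.last k) = ⊤)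
    (hfchain : ∀ i : Fin k, f i.castSucc ≤ f i.succ ∧
      ((f i.castSucc).subgroupOf (f i.succ)).Normal)
    (Ai : ℕ → Subgroup G) (hA0 : Ai 0 = A)
    (hAi : ∀ i, Ai (i + 1) = ⁅Ai i, ⁅X, X⁆⁆) :
    (∀ i, (Ai i).Normal) ∧ Ai k = ⊥ ∧
      (∀ i, Ai (i + 1) ⊔ X ≤ Ai i ⊔ X) ∧
      Ai 0 ⊔ X = ⊤ ∧ Ai k ⊔ X = X := by
  have hX'X : ⁅X, X⁆ ≤ X := by
    rw [Subgroup.commutator_le]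
    intro a ha b hb
    rw [commutatorElement_def]
    exact mul_mem (mul_mem (mul_mem ha hb) (inv_mem ha)) (inv_mem hb)
  -- each Ai ≤ A
  have hAiA : ∀ i, Ai i ≤ A := by
    intro i
    induction i with
    | zero => rw [hA0]
    | succ n ih =>
      rw [hAi n]
      calc ⁅Ai n, ⁅X, X⁆⁆ ≤ ⁅A, ⁅X, X⁆⁆ := Subgroup.commutator_mono ih le_rfl
        _ ≤ A := Subgroup.commutator_le_left A _
  -- conjugation by elements of X preserves X
  have hconjX : ∀ x ∈ X, Subgroup.map (MulAut.conj x).toMonoidHom X ≤ X := by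
    intro x hx
    rintro - ⟨y, hy, rfl⟩
    exact X.mul_mem (X.mul_mem hx hy) (X.inv_mem hx)
  -- normality of each Ai
  have hnorm : ∀ i, (Ai i).Normal := by
    intro i
    induction i with
    | zero => rw [hA0]; exact hA
    | succ n ih =>
      rw [← Subgroup.normalizer_eq_top_iff]
      rw [← top_le_iff, ← hG, sup_le_iff]
      constructor
      · -- X normalizes
        intro x hx
        have key : ∀ y ∈ X, Subgroup.map (MulAut.conj y).toMonoidHom (Ai (n + 1)) ≤
            Ai (n + 1) := by
          intro y hy
          rw [hAi n, Subgroup.map_commutator]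
          refine Subgroup.commutator_mono ?_ ?_
          · rintro - ⟨z, hz, rfl⟩
            exact ih.conj_mem z hz y
          · rw [Subgroup.map_commutator]
            exact Subgroup.commutator_mono (hconjX y hy) (hconjX y hy)
        rw [Subgroup.mem_normalizer_iff]
        intro h
        constructor
        · intro hh
          exact key x hx ⟨h, hh, rfl⟩
        · intro hh
          have := key x⁻¹ (X.inv_mem hx) ⟨x * h * x⁻¹, hh, rfl⟩
          simpa [mul_assoc] using this
      · -- A normalizes (indeed centralizes)
        intro a ha
        rw [Subgroup.mem_normalizer_iff]
        intro h
        constructor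
        · intro hh
          have : a * h * a⁻¹ = h := by
            have := (habel a ha h (hAiA _ hh)).eq
            rw [this]; group
          rw [this]; exact hh
        · intro hh
          have h1 : a * h * a⁻¹ ∈ A := hAiA _ hh
          have h2 : a⁻¹ * (a * h * a⁻¹) * a = a * h * a⁻¹ := by
            have := (habel a⁻¹ (A.inv_mem ha) _ h1).eq
            rw [this]; group
          have h3 : a⁻¹ * (a * h * a⁻¹) * a = h := by group
          rw [← h3, h2]; exact hh
  -- descending chain (via Ai (i+1) ≤ Ai i)
  have hdesc : ∀ i, Ai (i + 1) ≤ Ai i := by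
    intro i
    rw [hAi i]
    have := hnorm i
    exact Subgroup.commutator_le_left _ _
  -- monotonicity of f from 0
  have hfmono : ∀ j : Fin (k + 1), f 0 ≤ f j := by
    intro j
    induction j using Fin.induction with
    | zero => exact le_rfl
    | succ i ih => exact ih.trans (hfchain i).1
  -- key subnormality bound: Ai (k - j) ≤ f j
  have hbound : ∀ j : Fin (k + 1), Ai (k - (j : ℕ)) ≤ f j := by
    intro j
    induction j using Fin.reverseInduction with
    | last =>
      simp only [Fin.val_last, Nat.sub_self, hA0, hfl]
      exact le_top
    | cast i ih =>
      have hv1 : (i.castSucc : ℕ) = (i : ℕ) := rfl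
      have hv2 : (i.succ : ℕ) = (i : ℕ) + 1 := rfl
      have hik : (i : ℕ) < k := i.isLt
      have hstep : k - (i.castSucc : ℕ) = (k - (i.succ : ℕ)) + 1 := by
        rw [hv1, hv2]; omega
      rw [hstep, hAi]
      have h2 : ⁅X, X⁆ ≤ f i.castSucc := hf0 ▸ hfmono i.castSucc
      have hnrm : ⁅f i.succ, f i.castSucc⁆ ≤ f i.castSucc :=
        subgroupOf_normal_comm (hfchain i).1 (hfchain i).2
      exact le_trans (Subgroup.commutator_mono ih h2) hnrm
  -- Ai k = ⊥
  have hAk : Ai k = ⊥ := by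
    have h1 : Ai k ≤ f 0 := by
      have := hbound 0
      simpa using this
    have h2 : Ai k ≤ X := h1.trans (hf0 ▸ hX'X)
    have h3 : Ai k ≤ X ⊓ A := le_inf h2 (hAiA k)
    rw [hXA] at h3
    exact le_bot_iff.mp h3
  refine ⟨hnorm, hAk, ?_, ?_, ?_⟩
  · exact fun i => sup_le_sup_right (hdesc i) X
  · rw [hA0, sup_comm]; exact hG
  · rw [hAk, bot_sup_eq]
end

section
/- Let P and Q be posets. If the product poset P × Q (with componentwise order) contains a chain order-isomorphic to ℝ, then P or Q contains a chain order-isomorphic to ℝ. Equivalently, the real chain condition is preserved under finite products of posets. -/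
/-- If the product of two posets contains a chain order-isomorphic to `ℝ`, then one of
the factors contains a chain order-isomorphic to `ℝ`; i.e. the real chain condition is
preserved under finite products of posets. -/
theorem stmt_19 {P Q : Type*} [PartialOrder P] [PartialOrder Q]
    (f : ℝ → P × Q) (hf : StrictMono f) :
    (∃ g : ℝ → P, StrictMono g) ∨ (∃ g : ℝ → Q, StrictMono g) := by
  set p : ℝ → P := fun r => (f r).1 with hp'
  set q : ℝ → Q := fun r => (f r).2 with hq'
  have hp : Monotone p := fun a b hab => (hf.monotone hab).1
  have hq : Monotone q := fun a b hab => (hf.monotone hab).2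
  by_cases hsm : StrictMono p
  · exact Or.inl ⟨p, hsm⟩
  right
  obtain ⟨r, s, hrs, hps⟩ : ∃ r s : ℝ, r < s ∧ p r = p s := by
    by_contra h
    push_neg at h
    exact hsm fun a b hab => lt_of_le_of_ne (hp hab.le) (h a b hab)
  -- an embedding of ℝ into [r, s]
  set m : ℝ → ℝ := fun x => r + (s - r) * (((orderIsoIooNegOneOne ℝ x : ℝ) + 1) / 2) with hm'
  have hmmono : StrictMono m := by
    intro a b hab
    have : ((orderIsoIooNegOneOne ℝ a : ℝ)) < ((orderIsoIooNegOneOne ℝ b : ℝ)) :=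
      (orderIsoIooNegOneOne ℝ).strictMono hab
    have hsr : (0:ℝ) < s - r := sub_pos.2 hrs
    simp only [hm']
    nlinarith
  have hmem : ∀ x, r ≤ m x ∧ m x ≤ s := by
    intro x
    have h1 := (orderIsoIooNegOneOne ℝ x).2.1
    have h2 := (orderIsoIooNegOneOne ℝ x).2.2
    have hsr : (0:ℝ) < s - r := sub_pos.2 hrs
    constructor <;> simp only [hm'] <;> nlinarith
  have hpconst : ∀ x, p (m x) = p r := by
    intro x
    have h1 : p r ≤ p (m x) := hp (hmem x).1
    have h2 : p (m x) ≤ p s := hp (hmem x).2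
    exact le_antisymm (hps ▸ h2) h1
  refine ⟨fun x => q (m x), fun a b hab => ?_⟩
  have hflt : f (m a) < f (m b) := hf (hmmono hab)
  have hqle : q (m a) ≤ q (m b) := hq (hmmono hab).le
  refine lt_of_le_of_ne hqle fun hqeq => ?_
  apply hflt.ne
  exact Prod.ext (by rw [show (f (m a)).1 = p (m a) from rfl, show (f (m b)).1 = p (m b) from rfl, hpconst, hpconst]) hqeq
end
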